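/- arXiv:2203.08170 — 5 statements merged into one kernel-verified Lean document; each statement's English description precedes it below -/
import Mathlib

section
/- Let G be a finite simple graph of order n ≥ 3 with no isolated vertices. Then the root vertex u* of the Mycielskian μ(G) belongs to every gp-set of μ(G) if and only if G is isomorphic to the complete graph K_n. -/
open SimpleGraph

variable {V : Type*}

/-- The Mycielskian of a graph `G`: vertices are `some (Sum.inl v)` (original vertices),
`some (Sum.inr v)` (twin vertices), and `none` (the root `u*`). -/
def Mycielskian (G : SimpleGraph V) : SimpleGraph (Option (V ⊕ V)) :=
  SimpleGraph.fromRel (fun x y =>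
    (∃ u v, G.Adj u v ∧ x = some (Sum.inl u) ∧ y = some (Sum.inl v)) ∨
    (∃ u v, G.Adj u v ∧ x = some (Sum.inl u) ∧ y = some (Sum.inr v)) ∨
    (∃ u, x = some (Sum.inr u) ∧ y = none))

/-- `S` is a general position set: no shortest path between two vertices of `S`
contains a third element of `S`. -/
def IsGPSet (G : SimpleGraph V) (S : Set V) : Prop :=
  ∀ u ∈ S, ∀ v ∈ S, ∀ p : G.Walk u v, p.length = G.dist u v →
    ∀ w ∈ S, w ∈ p.support → w = u ∨ w = v

/-- The general position number of `G`: the maximum cardinality of a general position set. -/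
noncomputable def gpNumber (G : SimpleGraph V) [Fintype V] : ℕ :=
  sSup {k | ∃ S : Set V, IsGPSet G S ∧ S.ncard = k}

/-- A gp-set: a general position set of maximum cardinality. -/
def IsGpSet (G : SimpleGraph V) [Fintype V] (S : Set V) : Prop :=
  IsGPSet G S ∧ S.ncard = gpNumber G

/-! ### Auxiliary lemmas -/

section walks
variable {α : Type*} {G : SimpleGraph α} {u v : α}

lemma walk_len0 (p : G.Walk u v) (h : p.length = 0) : u = v ∧ p.support = [u] := by
  cases p with
  | nil => exact ⟨rfl, rfl⟩
  | cons h1 q => simp at h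

lemma walk_len1 (p : G.Walk u v) (h : p.length = 1) : G.Adj u v ∧ p.support = [u, v] := by
  cases p with
  | nil => simp at h
  | cons h1 q =>
    cases q with
    | nil => exact ⟨h1, rfl⟩
    | cons h2 r => simp [SimpleGraph.Walk.length_cons] at h

lemma walk_len2 (p : G.Walk u v) (h : p.length = 2) :
    ∃ a, G.Adj u a ∧ G.Adj a v ∧ p.support = [u, a, v] := by
  cases p with
  | nil => simp at h
  | cons h1 q =>
    cases q with
    | nil => simp at h
    | cons h2 r =>
      cases r with
      | nil => exact ⟨_, h1, h2, rfl⟩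
      | cons h3 s => simp [SimpleGraph.Walk.length_cons] at h

lemma walk_len3 (p : G.Walk u v) (h : p.length = 3) :
    ∃ a b, G.Adj u a ∧ G.Adj a b ∧ G.Adj b v ∧ p.support = [u, a, b, v] := by
  cases p with
  | nil => simp at h
  | cons h1 q =>
    cases q with
    | nil => simp at h
    | cons h2 r =>
      cases r with
      | nil => simp at h
      | cons h3 s =>
        cases s with
        | nil => exact ⟨_, _, h1, h2, h3, rfl⟩
        | cons h4 t => simp [SimpleGraph.Walk.length_cons] at h

lemma dist_eq_two' (hne : u ≠ v) (hadj : ¬ G.Adj u v) (p : G.Walk u v)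
    (hp : p.length = 2) : G.dist u v = 2 := by
  have hr : G.Reachable u v := ⟨p⟩
  have h2 : G.dist u v ≤ 2 := hp ▸ SimpleGraph.dist_le p
  have h0 : 0 < G.dist u v := hr.pos_dist_of_ne hne
  have h1 : G.dist u v ≠ 1 := fun h => hadj (SimpleGraph.dist_eq_one_iff_adj.mp h)
  omega

end walks

section adj
variable {G : SimpleGraph V} {u v : V}

lemma adj_ll : (Mycielskian G).Adj (some (Sum.inl u)) (some (Sum.inl v)) ↔ G.Adj u v := by
  rw [Mycielskian, SimpleGraph.fromRel_adj]
  constructor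
  · rintro ⟨hne, h | h⟩ <;>
      rcases h with ⟨a, b, hab, ha, hb⟩ | ⟨a, b, hab, ha, hb⟩ | ⟨a, ha, hb⟩ <;> simp_all
    exact hab.symm
  · intro h
    exact ⟨by simp [h.ne], Or.inl (Or.inl ⟨u, v, h, rfl, rfl⟩)⟩

lemma adj_lr : (Mycielskian G).Adj (some (Sum.inl u)) (some (Sum.inr v)) ↔ G.Adj u v := by
  rw [Mycielskian, SimpleGraph.fromRel_adj]
  constructor
  · rintro ⟨hne, h | h⟩ <;>
      rcases h with ⟨a, b, hab, ha, hb⟩ | ⟨a, b, hab, ha, hb⟩ | ⟨a, ha, hb⟩ <;> simp_all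
  · intro h
    exact ⟨by simp, Or.inl (Or.inr (Or.inl ⟨u, v, h, rfl, rfl⟩))⟩

lemma adj_rl : (Mycielskian G).Adj (some (Sum.inr u)) (some (Sum.inl v)) ↔ G.Adj u v := by
  rw [(Mycielskian G).adj_comm, adj_lr, G.adj_comm]

lemma adj_rr : ¬ (Mycielskian G).Adj (some (Sum.inr u)) (some (Sum.inr v)) := by
  rw [Mycielskian, SimpleGraph.fromRel_adj]
  rintro ⟨hne, h | h⟩ <;>
    rcases h with ⟨a, b, hab, ha, hb⟩ | ⟨a, b, hab, ha, hb⟩ | ⟨a, ha, hb⟩ <;> simp_all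

lemma adj_rn : (Mycielskian G).Adj (some (Sum.inr u)) none := by
  rw [Mycielskian, SimpleGraph.fromRel_adj]
  exact ⟨by simp, Or.inl (Or.inr (Or.inr ⟨u, rfl, rfl⟩))⟩

lemma adj_nr : (Mycielskian G).Adj none (some (Sum.inr u)) := adj_rn.symm

lemma adj_ln : ¬ (Mycielskian G).Adj (some (Sum.inl u)) none := by
  rw [Mycielskian, SimpleGraph.fromRel_adj]
  rintro ⟨hne, h | h⟩ <;>
    rcases h with ⟨a, b, hab, ha, hb⟩ | ⟨a, b, hab, ha, hb⟩ | ⟨a, ha, hb⟩ <;> simp_all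

lemma adj_nl : ¬ (Mycielskian G).Adj none (some (Sum.inl u)) :=
  fun h => adj_ln h.symm

end adj

section machinery
variable {α : Type*} [Fintype α] (H : SimpleGraph α)

lemma gp_bddAbove : BddAbove {k | ∃ S : Set α, IsGPSet H S ∧ S.ncard = k} := by
  refine ⟨Fintype.card α, ?_⟩
  rintro k ⟨S, -, rfl⟩
  calc S.ncard ≤ (Set.univ : Set α).ncard :=
        Set.ncard_le_ncard (Set.subset_univ S) Set.finite_univ
    _ = Fintype.card α := by rw [Set.ncard_univ, Nat.card_eq_fintype_card]

lemma le_gpNumber {S : Set α} (hS : IsGPSet H S) : S.ncard ≤ gpNumber H :=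
  le_csSup (gp_bddAbove H) ⟨S, hS, rfl⟩

lemma exists_gpSet : ∃ S : Set α, IsGpSet H S := by
  have h0 : (0 : ℕ) ∈ {k | ∃ S : Set α, IsGPSet H S ∧ S.ncard = k} :=
    ⟨∅, fun u hu => absurd hu (Set.notMem_empty u), Set.ncard_empty _⟩
  obtain ⟨S, hS, hc⟩ := Nat.sSup_mem ⟨0, h0⟩ (gp_bddAbove H)
  exact ⟨S, hS, hc⟩

end machinery

lemma inj_some_inl : Function.Injective (fun v : V => (some (Sum.inl v) : Option (V ⊕ V))) :=
  fun a b h => by simpa using h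

lemma inj_some_inr : Function.Injective (fun v : V => (some (Sum.inr v) : Option (V ⊕ V))) :=
  fun a b h => by simpa using h

lemma ncard_range_inl [Fintype V] :
    (Set.range fun v : V => (some (Sum.inl v) : Option (V ⊕ V))).ncard = Fintype.card V := by
  rw [← Set.image_univ, Set.ncard_image_of_injective _ inj_some_inl, Set.ncard_univ,
    Nat.card_eq_fintype_card]

lemma ncard_range_inr [Fintype V] :
    (Set.range fun v : V => (some (Sum.inr v) : Option (V ⊕ V))).ncard = Fintype.card V := by
  rw [← Set.image_univ, Set.ncard_image_of_injective _ inj_some_inr, Set.ncard_univ,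
    Nat.card_eq_fintype_card]

lemma dist_rr {G : SimpleGraph V} {a b : V} (hab : a ≠ b) :
    (Mycielskian G).dist (some (Sum.inr a)) (some (Sum.inr b)) = 2 :=
  dist_eq_two' (by simp [hab]) adj_rr
    (Walk.cons adj_rn (Walk.cons adj_nr Walk.nil)) rfl

/-- The set of twin vertices is always in general position. -/
lemma gp_twins (G : SimpleGraph V) :
    IsGPSet (Mycielskian G) (Set.range fun v => (some (Sum.inr v) : Option (V ⊕ V))) := by
  rintro x ⟨a, rfl⟩ y ⟨b, rfl⟩ p hp w hw hws
  by_cases hab : a = b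
  · subst hab
    rw [SimpleGraph.dist_self] at hp
    obtain ⟨-, hs⟩ := walk_len0 p hp
    rw [hs] at hws
    left; simpa using hws
  · rw [dist_rr hab] at hp
    obtain ⟨m, h1, h2, hs⟩ := walk_len2 p hp
    rw [hs] at hws
    simp only [List.mem_cons, List.not_mem_nil, or_false] at hws
    rcases hws with rfl | rfl | rfl
    · left; rfl
    · exfalso
      obtain ⟨c, rfl⟩ := hw
      exact adj_rr h1
    · right; rfl

/-- The originals together with the root form a general position set of `μ(K_n)`. -/
lemma gp_top_set [Fintype V] (hn : 3 ≤ Fintype.card V) :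
    IsGPSet (Mycielskian (⊤ : SimpleGraph V))
      (insert none (Set.range fun v => (some (Sum.inl v) : Option (V ⊕ V)))) := by
  have hnt : Nontrivial V := Fintype.one_lt_card_iff_nontrivial.mp (by omega)
  have hd2 : ∀ a : V, (Mycielskian (⊤ : SimpleGraph V)).dist (some (Sum.inl a)) none = 2 := by
    intro a
    obtain ⟨c, hc⟩ := exists_ne a
    exact dist_eq_two' (by simp) adj_ln
      (Walk.cons (adj_lr.mpr (by simpa using hc.symm)) (Walk.cons adj_rn Walk.nil)) (by simp)
  have main : ∀ (a : V) (p : (Mycielskian (⊤ : SimpleGraph V)).Walk (some (Sum.inl a)) none),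
      p.length = (Mycielskian (⊤ : SimpleGraph V)).dist (some (Sum.inl a)) none →
      ∀ w : Option (V ⊕ V), (w = none ∨ ∃ c, some (Sum.inl c) = w) → w ∈ p.support →
      w = some (Sum.inl a) ∨ w = none := by
    intro a p hp w hw hws
    rw [hd2 a] at hp
    obtain ⟨m, h1, h2, hs⟩ := walk_len2 p hp
    rw [hs] at hws
    simp only [List.mem_cons, List.not_mem_nil, or_false] at hws
    rcases hws with rfl | rfl | rfl
    · left; rfl
    · exfalso
      rcases hw with rfl | ⟨c, rfl⟩
      · exact (Mycielskian (⊤ : SimpleGraph V)).irrefl h2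
      · exact adj_ln h2
    · right; rfl
  rintro x hx y hy p hp w hw hws
  simp only [Set.mem_insert_iff, Set.mem_range] at hx hy hw
  rcases hx with rfl | ⟨a, rfl⟩ <;> rcases hy with rfl | ⟨b, rfl⟩
  · rw [SimpleGraph.dist_self] at hp
    obtain ⟨-, hs⟩ := walk_len0 p hp
    rw [hs] at hws
    left; simpa using hws
  · have hp' : p.reverse.length =
        (Mycielskian (⊤ : SimpleGraph V)).dist (some (Sum.inl b)) none := by
      rw [SimpleGraph.Walk.length_reverse, hp, SimpleGraph.dist_comm]
    have hws' : w ∈ p.reverse.support := by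
      rw [SimpleGraph.Walk.support_reverse, List.mem_reverse]; exact hws
    rcases main b p.reverse hp' w hw hws' with h | h
    · right; exact h
    · left; exact h
  · exact main a p hp w hw hws
  · by_cases hab : a = b
    · subst hab
      rw [SimpleGraph.dist_self] at hp
      obtain ⟨-, hs⟩ := walk_len0 p hp
      rw [hs] at hws
      left; simpa using hws
    · have hd : (Mycielskian (⊤ : SimpleGraph V)).dist (some (Sum.inl a)) (some (Sum.inl b)) = 1 :=
        SimpleGraph.dist_eq_one_iff_adj.mpr (adj_ll.mpr (by simpa using hab))
      rw [hd] at hp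
      obtain ⟨-, hs⟩ := walk_len1 p hp
      rw [hs] at hws
      simpa using hws

/-- In `μ(K_n)`, a general position set avoiding the root has at most `n` elements. -/
lemma gp_bound_top [Fintype V] (hn : 3 ≤ Fintype.card V)
    (S : Set (Option (V ⊕ V))) (hgp : IsGPSet (Mycielskian (⊤ : SimpleGraph V)) S)
    (hnone : none ∉ S) : S.ncard ≤ Fintype.card V := by
  classical
  set n := Fintype.card V with hndef
  have hle_n : ∀ C : Set V, C.ncard ≤ n := fun C =>
    le_trans (Set.ncard_le_ncard (Set.subset_univ C) Set.finite_univ)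
      (le_of_eq (by rw [Set.ncard_univ, Nat.card_eq_fintype_card]))
  set A : Set V := {v | some (Sum.inl v) ∈ S} with hA
  set B : Set V := {v | some (Sum.inr v) ∈ S} with hB
  have hSeq : S = ((fun v => (some (Sum.inl v) : Option (V ⊕ V))) '' A) ∪
      ((fun v => (some (Sum.inr v) : Option (V ⊕ V))) '' B) := by
    ext z
    constructor
    · intro hz
      match z with
      | none => exact absurd hz hnone
      | some (Sum.inl a) => exact Or.inl ⟨a, hz, rfl⟩
      | some (Sum.inr a) => exact Or.inr ⟨a, hz, rfl⟩
    · rintro (⟨a, ha, rfl⟩ | ⟨a, ha, rfl⟩) <;> exact ha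
  have hcount : S.ncard ≤ A.ncard + B.ncard := by
    rw [hSeq]
    refine le_trans (Set.ncard_union_le _ _) ?_
    rw [Set.ncard_image_of_injective _ inj_some_inl, Set.ncard_image_of_injective _ inj_some_inr]
  have F1 : ∀ u, u ∈ A → u ∈ B → ∀ w ∈ A, w = u := by
    intro u huA huB w hwA
    by_contra hwu
    have hadj1 : (Mycielskian (⊤ : SimpleGraph V)).Adj (some (Sum.inl u)) (some (Sum.inl w)) :=
      adj_ll.mpr (by simpa using fun h => hwu h.symm)
    have hadj2 : (Mycielskian (⊤ : SimpleGraph V)).Adj (some (Sum.inl w)) (some (Sum.inr u)) :=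
      adj_lr.mpr (by simpa using hwu)
    have hd : (Mycielskian (⊤ : SimpleGraph V)).dist (some (Sum.inl u)) (some (Sum.inr u)) = 2 :=
      dist_eq_two' (by simp) (by rw [adj_lr]; simp)
        (Walk.cons hadj1 (Walk.cons hadj2 Walk.nil)) (by simp)
    have := hgp _ huA _ huB (Walk.cons hadj1 (Walk.cons hadj2 Walk.nil)) (by simp [hd])
      _ hwA (by simp)
    simp only [Option.some.injEq, Sum.inl.injEq, reduceCtorEq, or_false] at this
    exact hwu this
  have F2 : ∀ u v, u ∈ B → v ∈ B → u ≠ v → ∀ w ∈ A, w = u ∨ w = v := by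
    intro u v huB hvB huv w hwA
    by_contra hcon
    push_neg at hcon
    obtain ⟨hwu, hwv⟩ := hcon
    have hadj1 : (Mycielskian (⊤ : SimpleGraph V)).Adj (some (Sum.inr u)) (some (Sum.inl w)) :=
      adj_rl.mpr (by simpa using fun h => hwu h.symm)
    have hadj2 : (Mycielskian (⊤ : SimpleGraph V)).Adj (some (Sum.inl w)) (some (Sum.inr v)) :=
      adj_lr.mpr (by simpa using hwv)
    have := hgp _ huB _ hvB (Walk.cons hadj1 (Walk.cons hadj2 Walk.nil)) (by simp [dist_rr huv])
      _ hwA (by simp)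
    simp at this
  rcases Set.eq_empty_or_nonempty B with hBe | ⟨u, huB⟩
  · have := hle_n A
    rw [hBe, Set.ncard_empty] at hcount
    omega
  · by_cases hu : ∀ x ∈ B, x = u
    · have hBu : B = {u} := Set.eq_singleton_iff_unique_mem.mpr ⟨huB, hu⟩
      have hB1 : B.ncard = 1 := by rw [hBu]; simp
      by_cases huA : u ∈ A
      · have hsub : A ⊆ {u} := fun w hw => Set.mem_singleton_iff.mpr (F1 u huA huB w hw)
        have hA1 : A.ncard ≤ 1 :=
          le_trans (Set.ncard_le_ncard hsub (Set.finite_singleton u))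
            (le_of_eq (Set.ncard_singleton u))
        omega
      · have hins : (insert u A).ncard ≤ n := hle_n _
        rw [Set.ncard_insert_of_notMem huA A.toFinite] at hins
        omega
    · push_neg at hu
      obtain ⟨v, hvB, hvu⟩ := hu
      by_cases hext : ∀ x ∈ B, x = u ∨ x = v
      · have hBsub : B ⊆ {u, v} := fun x hx => by
          rcases hext x hx with rfl | rfl <;> simp
        have hB2 : B.ncard ≤ 2 := by
          refine le_trans (Set.ncard_le_ncard hBsub (Set.toFinite _)) ?_
          rw [Set.ncard_pair (Ne.symm hvu)]
        have hA1 : A.ncard ≤ 1 := by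
          by_cases huA : u ∈ A
          · exact le_trans (Set.ncard_le_ncard
              (fun w hw => Set.mem_singleton_iff.mpr (F1 u huA huB w hw))
              (Set.finite_singleton u)) (le_of_eq (Set.ncard_singleton u))
          · by_cases hvA : v ∈ A
            · exact le_trans (Set.ncard_le_ncard
                (fun w hw => Set.mem_singleton_iff.mpr (F1 v hvA hvB w hw))
                (Set.finite_singleton v)) (le_of_eq (Set.ncard_singleton v))
            · have : A = ∅ := by
                ext w
                simp only [Set.mem_empty_iff_false, iff_false]
                intro hw
                rcases F2 u v huB hvB (Ne.symm hvu) w hw with rfl | rfl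
                · exact huA hw
                · exact hvA hw
              rw [this, Set.ncard_empty]; omega
        omega
      · push_neg at hext
        obtain ⟨t, htB, htu, htv⟩ := hext
        have hAe : A = ∅ := by
          ext w
          simp only [Set.mem_empty_iff_false, iff_false]
          intro hw
          rcases F2 u v huB hvB (Ne.symm hvu) w hw with h1 | h1
          · rcases F2 v t hvB htB (fun h => htv h.symm) w hw with h2 | h2
            · exact hvu (h2.symm.trans h1)
            · exact htu (h2.symm.trans h1)
          · rcases F2 u t huB htB (fun h => htu h.symm) w hw with h2 | h2
            · exact hvu (h1.symm.trans h2)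
            · exact htv (h2.symm.trans h1)
        have := hle_n B
        rw [hAe, Set.ncard_empty] at hcount
        omega

/-- For a graph with a universal vertex `s` and a pendant `t` attached to `s`, the twins
together with the original `t` form a general position set. -/
lemma gp_special (G : SimpleGraph V) {s t : V} (hst : G.Adj t s)
    (hNt : ∀ x, G.Adj t x → x = s) (huniv : ∀ x, x ≠ s → G.Adj s x) :
    IsGPSet (Mycielskian G)
      (insert (some (Sum.inl t)) (Set.range fun v => (some (Sum.inr v) : Option (V ⊕ V)))) := by
  have main : ∀ (b : V) (p : (Mycielskian G).Walk (some (Sum.inl t)) (some (Sum.inr b))),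
      p.length = (Mycielskian G).dist (some (Sum.inl t)) (some (Sum.inr b)) →
      ∀ w : Option (V ⊕ V), (w = some (Sum.inl t) ∨ ∃ c, some (Sum.inr c) = w) →
      w ∈ p.support → w = some (Sum.inl t) ∨ w = some (Sum.inr b) := by
    intro b p hp w hw hws
    by_cases hbs : b = s
    · have hd : (Mycielskian G).dist (some (Sum.inl t)) (some (Sum.inr b)) = 1 :=
        SimpleGraph.dist_eq_one_iff_adj.mpr (adj_lr.mpr (by rw [hbs]; exact hst))
      rw [hd] at hp
      obtain ⟨-, hsup⟩ := walk_len1 p hp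
      rw [hsup] at hws
      simpa using hws
    · have hnadj : ¬ (Mycielskian G).Adj (some (Sum.inl t)) (some (Sum.inr b)) :=
        fun h => hbs (hNt b (adj_lr.mp h))
    
      have hadj1 : (Mycielskian G).Adj (some (Sum.inl t)) (some (Sum.inl s)) := adj_ll.mpr hst
      have hadj2 : (Mycielskian G).Adj (some (Sum.inl s)) (some (Sum.inr b)) :=
        adj_lr.mpr (huniv b hbs)
      have hd : (Mycielskian G).dist (some (Sum.inl t)) (some (Sum.inr b)) = 2 :=
        dist_eq_two' (by simp) hnadj (Walk.cons hadj1 (Walk.cons hadj2 Walk.nil)) (by simp)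
      rw [hd] at hp
      obtain ⟨m, h1, h2, hsup⟩ := walk_len2 p hp
      rw [hsup] at hws
      simp only [List.mem_cons, List.not_mem_nil, or_false] at hws
      rcases hws with rfl | rfl | rfl
      · left; rfl
      · exfalso
        rcases hw with rfl | ⟨c, rfl⟩
        · exact (Mycielskian G).irrefl h1
        · exact adj_rr h2
      · right; rfl
  rintro x hx y hy p hp w hw hws
  simp only [Set.mem_insert_iff, Set.mem_range] at hx hy hw
  rcases hx with rfl | ⟨a, rfl⟩ <;> rcases hy with rfl | ⟨b, rfl⟩
  · rw [SimpleGraph.dist_self] at hp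
    obtain ⟨-, hsup⟩ := walk_len0 p hp
    rw [hsup] at hws
    left; simpa using hws
  · exact main b p hp w hw hws
  · have hp' : p.reverse.length =
        (Mycielskian G).dist (some (Sum.inl t)) (some (Sum.inr a)) := by
      rw [SimpleGraph.Walk.length_reverse, hp, SimpleGraph.dist_comm]
    have hws' : w ∈ p.reverse.support := by
      rw [SimpleGraph.Walk.support_reverse, List.mem_reverse]; exact hws
    rcases main a p.reverse hp' w hw hws' with h | h
    · right; exact h
    · left; exact h
  · by_cases hab : a = b
    · subst hab
      rw [SimpleGraph.dist_self] at hp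
      obtain ⟨-, hsup⟩ := walk_len0 p hp
      rw [hsup] at hws
      left; simpa using hws
    · rw [dist_rr hab] at hp
      obtain ⟨m, h1, h2, hsup⟩ := walk_len2 p hp
      rw [hsup] at hws
      simp only [List.mem_cons, List.not_mem_nil, or_false] at hws
      rcases hws with rfl | rfl | rfl
      · left; rfl
      · exfalso
        rcases hw with rfl | ⟨c, rfl⟩
        · have ha : a = s := hNt a (adj_rl.mp h1).symm
          have hb : b = s := hNt b (adj_lr.mp h2)
          exact hab (ha.trans hb.symm)
        · exact adj_rr h1
      · right; rfl

/-- If all originals and the root lie in a common general position set, `G` is complete. -/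
lemma complete_of_gp [Fintype V] (G : SimpleGraph V) (hiso : ∀ v : V, ∃ u, G.Adj v u)
    {S : Set (Option (V ⊕ V))} (hgp : IsGPSet (Mycielskian G) S)
    (hS : ∀ v : V, some (Sum.inl v) ∈ S) (hnone : none ∈ S) : G = ⊤ := by
  ext a b
  simp only [top_adj]
  constructor
  · exact fun h => h.ne
  · intro hab
    by_contra hnadj
    obtain ⟨a0, ha0⟩ := hiso a
    obtain ⟨b0, hb0⟩ := hiso b
    let q : (Mycielskian G).Walk (some (Sum.inl a)) (some (Sum.inl b)) :=
      Walk.cons (adj_lr.mpr ha0) (Walk.cons adj_rn (Walk.cons adj_nr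
        (Walk.cons (adj_rl.mpr hb0.symm) Walk.nil)))
    have hq4 : q.length = 4 := rfl
    have hd4 : (Mycielskian G).dist (some (Sum.inl a)) (some (Sum.inl b)) ≤ 4 :=
      hq4 ▸ SimpleGraph.dist_le q
    have hr : (Mycielskian G).Reachable (some (Sum.inl a)) (some (Sum.inl b)) := ⟨q⟩
    have hd0 : 0 < (Mycielskian G).dist (some (Sum.inl a)) (some (Sum.inl b)) :=
      hr.pos_dist_of_ne (by simp [hab])
    have hd1 : (Mycielskian G).dist (some (Sum.inl a)) (some (Sum.inl b)) ≠ 1 :=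
      fun h => hnadj (adj_ll.mp (SimpleGraph.dist_eq_one_iff_adj.mp h))
    obtain ⟨p, hp⟩ := hr.exists_walk_length_eq_dist
    have hcases : (Mycielskian G).dist (some (Sum.inl a)) (some (Sum.inl b)) = 2 ∨
        (Mycielskian G).dist (some (Sum.inl a)) (some (Sum.inl b)) = 3 ∨
        (Mycielskian G).dist (some (Sum.inl a)) (some (Sum.inl b)) = 4 := by omega
    rcases hcases with hd | hd | hd
    · obtain ⟨m, h1, h2, hsup⟩ := walk_len2 p (hp.trans hd)
      rcases m with _ | (c | c)
      · exact adj_ln h1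
      · have := hgp _ (hS a) _ (hS b) p hp (some (Sum.inl c)) (hS c) (by rw [hsup]; simp)
        rcases this with h | h
        · rw [show c = a by simpa using h] at h1
          exact (Mycielskian G).irrefl h1
        · rw [show c = b by simpa using h] at h2
          exact (Mycielskian G).irrefl h2
      · have hc1 : G.Adj a c := adj_lr.mp h1
        have hc2 : G.Adj c b := adj_rl.mp h2
        let q2 : (Mycielskian G).Walk (some (Sum.inl a)) (some (Sum.inl b)) :=
          Walk.cons (adj_ll.mpr hc1) (Walk.cons (adj_ll.mpr hc2) Walk.nil)
        have := hgp _ (hS a) _ (hS b) q2 (by rw [show q2.length = 2 from rfl, hd])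
          (some (Sum.inl c)) (hS c) (by simp [q2, Walk.support_cons])
        rcases this with h | h
        · exact G.irrefl (by rw [show c = a by simpa using h] at hc1; exact hc1)
        · exact G.irrefl (by rw [show c = b by simpa using h] at hc2; exact hc2)
    · obtain ⟨m1, m2, h1, h2, h3, hsup⟩ := walk_len3 p (hp.trans hd)
      rcases m1 with _ | (c | c)
      · exact adj_ln h1
      · have := hgp _ (hS a) _ (hS b) p hp (some (Sum.inl c)) (hS c) (by rw [hsup]; simp)
        rcases this with h | h
        · rw [show c = a by simpa using h] at h1
          exact (Mycielskian G).irrefl h1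
        · rw [show c = b by simpa using h] at h1
          exact hnadj (adj_ll.mp h1)
      · rcases m2 with _ | (e | e)
        · have := hgp _ (hS a) _ (hS b) p hp none hnone (by rw [hsup]; simp)
          simp at this
        · have he : G.Adj e b := adj_ll.mp h3
          have := hgp _ (hS a) _ (hS b) p hp (some (Sum.inl e)) (hS e) (by rw [hsup]; simp)
          rcases this with h | h
          · rw [show e = a by simpa using h] at he
            exact hnadj he
          · rw [show e = b by simpa using h] at he
            exact G.irrefl he
        · exact adj_rr h2
    · have := hgp _ (hS a) _ (hS b) q (by rw [hq4, hd]) none hnone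
        (by simp [q, Walk.support_cons])
      simp at this

/-- For a graph `G` of order `n ≥ 3` with no isolated vertices, the root
vertex of the Mycielskian belongs to every gp-set of `μ(G)` iff `G` is complete. -/
theorem root_in_every_gpSet_iff_complete [Fintype V] (G : SimpleGraph V)
    (hn : 3 ≤ Fintype.card V) (hiso : ∀ v : V, ∃ u, G.Adj v u) :
    (∀ S : Set (Option (V ⊕ V)), IsGpSet (Mycielskian G) S → none ∈ S) ↔ G = ⊤ := by
  classical
  constructor
  · intro H
    obtain ⟨S, hgp, hcard⟩ := exists_gpSet (Mycielskian G)
    have hnS : none ∈ S := H S ⟨hgp, hcard⟩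
    have hgN : Fintype.card V ≤ gpNumber (Mycielskian G) := by
      have := le_gpNumber (Mycielskian G) (gp_twins G)
      rwa [ncard_range_inr] at this
    have hSn1 : Fintype.card V + 1 ≤ S.ncard := by
      by_contra hlt
      have hEq : gpNumber (Mycielskian G) = Fintype.card V := by omega
      have hT : IsGpSet (Mycielskian G) (Set.range fun v => (some (Sum.inr v) : Option (V ⊕ V))) :=
        ⟨gp_twins G, by rw [ncard_range_inr, hEq]⟩
      have := H _ hT
      simp at this
    set A : Set V := {v | some (Sum.inl v) ∈ S} with hA
    set B : Set V := {v | some (Sum.inr v) ∈ S} with hB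
    have hSeq : S = insert none
        (((fun v => (some (Sum.inl v) : Option (V ⊕ V))) '' A) ∪
          ((fun v => (some (Sum.inr v) : Option (V ⊕ V))) '' B)) := by
      ext z
      constructor
      · intro hz
        match z with
        | none => exact Set.mem_insert _ _
        | some (Sum.inl a) => exact Set.mem_insert_of_mem _ (Or.inl ⟨a, hz, rfl⟩)
        | some (Sum.inr a) => exact Set.mem_insert_of_mem _ (Or.inr ⟨a, hz, rfl⟩)
      · rintro (rfl | ⟨a, ha, rfl⟩ | ⟨a, ha, rfl⟩)
        · exact hnS
        · exact ha
        · exact ha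
    have hdisj : Disjoint ((fun v => (some (Sum.inl v) : Option (V ⊕ V))) '' A)
        ((fun v => (some (Sum.inr v) : Option (V ⊕ V))) '' B) := by
      rw [Set.disjoint_left]
      rintro z ⟨a, -, rfl⟩ ⟨b, -, hzb⟩
      simp at hzb
    have hcount : S.ncard = A.ncard + B.ncard + 1 := by
      rw [hSeq, Set.ncard_insert_of_notMem (by simp) (Set.toFinite _),
        Set.ncard_union_eq hdisj (Set.toFinite _) (Set.toFinite _),
        Set.ncard_image_of_injective _ inj_some_inl, Set.ncard_image_of_injective _ inj_some_inr]
    have G1 : ∀ u v, u ∈ B → v ∈ B → u = v := by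
      intro u v huB hvB
      by_contra huv
      have := hgp _ huB _ hvB (Walk.cons adj_rn (Walk.cons adj_nr Walk.nil))
        (by simp [dist_rr huv]) none hnS (by simp)
      simp at this
    have G2 : ∀ t, t ∈ B → ∀ v, v ∈ A → ¬ G.Adj t v := by
      intro t htB v hvA hadj
      have hd : (Mycielskian G).dist (some (Sum.inl v)) none = 2 :=
        dist_eq_two' (by simp) adj_ln
          (Walk.cons (adj_lr.mpr hadj.symm) (Walk.cons adj_rn Walk.nil)) (by simp)
      have := hgp _ hvA _ hnS (Walk.cons (adj_lr.mpr hadj.symm) (Walk.cons adj_rn Walk.nil))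
        (by simp [hd]) (some (Sum.inr t)) htB (by simp)
      simp at this
    rcases Set.eq_empty_or_nonempty B with hBe | ⟨t, htB⟩
    · have hAcard : Fintype.card V ≤ A.ncard := by
        rw [hBe, Set.ncard_empty] at hcount
        omega
      have hAuniv : ∀ v : V, v ∈ A := by
        intro v
        by_contra hv
        have h1 : (insert v A).ncard ≤ Fintype.card V :=
          le_trans (Set.ncard_le_ncard (Set.subset_univ _) Set.finite_univ)
            (le_of_eq (by rw [Set.ncard_univ, Nat.card_eq_fintype_card]))
        rw [Set.ncard_insert_of_notMem hv (Set.toFinite _)] at h1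
        omega
      exact complete_of_gp G hiso hgp (fun v => hAuniv v) hnS
    · exfalso
      obtain ⟨s, hts⟩ := hiso t
      have hBt : B = {t} := Set.eq_singleton_iff_unique_mem.mpr ⟨htB, fun x hx => G1 x t hx htB⟩
      have hB1 : B.ncard = 1 := by rw [hBt]; exact Set.ncard_singleton t
      have hsA : s ∉ A := fun h => G2 t htB s h hts
      have hsub : A ⊆ {s}ᶜ := by
        intro x hx
        simp only [Set.mem_compl_iff, Set.mem_singleton_iff]
        rintro rfl
        exact hsA hx
      have hcompl : ({s}ᶜ : Set V).ncard + 1 = Fintype.card V := by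
        have h1 : (insert s ({s}ᶜ : Set V)).ncard = ({s}ᶜ : Set V).ncard + 1 :=
          Set.ncard_insert_of_notMem (by simp) (Set.toFinite _)
        have h2 : insert s ({s}ᶜ : Set V) = Set.univ := by
          ext x; by_cases h : x = s <;> simp [h]
        rw [h2, Set.ncard_univ, Nat.card_eq_fintype_card] at h1
        omega
      have hAle : ({s}ᶜ : Set V).ncard ≤ A.ncard := by omega
      have hAeq : A = {s}ᶜ := Set.eq_of_subset_of_ncard_le hsub hAle (Set.toFinite _)
      have hNt : ∀ x, G.Adj t x → x = s := by
        intro x hx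
        by_contra hxs
        have hxA : x ∈ A := by
          rw [hAeq]
          simpa using hxs
        exact G2 t htB x hxA hx
      have huniv : ∀ x, x ≠ s → G.Adj s x := by
        intro v hvs
        by_cases hvt : v = t
        · rw [hvt]; exact hts.symm
        · have hvA : v ∈ A := by rw [hAeq]; simpa using hvs
          have hvS : some (Sum.inl v) ∈ S := hvA
          have hnadj : ¬ G.Adj v t := fun h => G2 t htB v hvA h.symm
          obtain ⟨w0, hw0⟩ := hiso v
          let q3 : (Mycielskian G).Walk (some (Sum.inl v)) (some (Sum.inr t)) :=
            Walk.cons (adj_lr.mpr hw0) (Walk.cons adj_rn (Walk.cons adj_nr Walk.nil))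
          have hq3 : q3.length = 3 := rfl
          have hdle : (Mycielskian G).dist (some (Sum.inl v)) (some (Sum.inr t)) ≤ 3 :=
            hq3 ▸ SimpleGraph.dist_le q3
          have hr : (Mycielskian G).Reachable (some (Sum.inl v)) (some (Sum.inr t)) := ⟨q3⟩
          have hd0 : 0 < (Mycielskian G).dist (some (Sum.inl v)) (some (Sum.inr t)) :=
            hr.pos_dist_of_ne (by simp)
          have hd1 : (Mycielskian G).dist (some (Sum.inl v)) (some (Sum.inr t)) ≠ 1 :=
            fun h => hnadj (adj_lr.mp (SimpleGraph.dist_eq_one_iff_adj.mp h))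
          have hd3 : (Mycielskian G).dist (some (Sum.inl v)) (some (Sum.inr t)) ≠ 3 := by
            intro h
            have := hgp _ hvS _ htB q3 (by rw [hq3, h]) none hnS
              (by simp [q3, Walk.support_cons])
            simp at this
          have hd2 : (Mycielskian G).dist (some (Sum.inl v)) (some (Sum.inr t)) = 2 := by omega
          obtain ⟨p, hp⟩ := hr.exists_walk_length_eq_dist
          obtain ⟨m, h1, h2, hsup⟩ := walk_len2 p (hp.trans hd2)
          rcases m with _ | (c | c)
          · exact (adj_ln h1).elim
          · have hvc : G.Adj v c := adj_ll.mp h1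
            have hct : G.Adj c t := adj_lr.mp h2
            have hcs : c = s := hNt c hct.symm
            rw [hcs] at hvc
            exact hvc.symm
          · exact (adj_rr h2).elim
      have hTgp := gp_special G hts hNt huniv
      have hTcard : (insert (some (Sum.inl t))
          (Set.range fun v => (some (Sum.inr v) : Option (V ⊕ V)))).ncard
          = Fintype.card V + 1 := by
        rw [Set.ncard_insert_of_notMem (by simp) (Set.toFinite _), ncard_range_inr]
      have hup : S.ncard ≤ Fintype.card V + 1 := by
        have hle := Set.ncard_le_ncard hsub (Set.toFinite _)
        omega
      have hgpN_eq : gpNumber (Mycielskian G) = Fintype.card V + 1 := by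
        have hge := le_gpNumber (Mycielskian G) hTgp
        omega
      have hmem : none ∈ insert (some (Sum.inl t))
          (Set.range fun v => (some (Sum.inr v) : Option (V ⊕ V))) :=
        H _ ⟨hTgp, by rw [hTcard, hgpN_eq]⟩
      simp at hmem
  · rintro rfl
    intro S hSgp
    by_contra hns
    obtain ⟨hgp, hcard⟩ := hSgp
    have hb := gp_bound_top hn S hgp hns
    have h2 : (insert none (Set.range fun v => (some (Sum.inl v) : Option (V ⊕ V)))).ncard
        = Fintype.card V + 1 := by
      rw [Set.ncard_insert_of_notMem (by simp) (Set.toFinite _), ncard_range_inl]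
    have hge := le_gpNumber (Mycielskian (⊤ : SimpleGraph V)) (gp_top_set hn)
    omega
end

section
/- For any integer n ≥ 3, the Mycielskian of the complete graph K_n satisfies gp(μ(K_n)) = n + 1, and moreover V ∪ {u*} is the unique gp-set of μ(K_n), where V is the original vertex set of K_n and u* is the root. -/
/-!
`μ(K_n)` has diameter two, so a set `S` is in general position exactly when no vertex of `S`
is adjacent to two non-adjacent vertices of `S`. The originals together with the root pass this
test, since the root has no original neighbour. A general position set containing a twin `u'`
is trapped: with the root it lies in `{u*, u, u'}`; with an original `v` and a twin `w'` where
`v ≠ w`, it lies in `{v, v', w'}` or in `{w'} ∪ (V \ {w})`; otherwise in `{u*, u, u'}` or in `V'`.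
Hence it has at most `n` vertices.
-/

open SimpleGraph

variable {V : Type*}

section Mycielskian

variable {G : SimpleGraph V} {u v : V}

@[simp] lemma mycielskian_adj_inl_inl :
    (Mycielskian G).Adj (some (.inl u)) (some (.inl v)) ↔ G.Adj u v := by
  simpa [Mycielskian, fromRel_adj, G.adj_comm v u] using G.ne_of_adj

@[simp] lemma mycielskian_adj_inl_inr :
    (Mycielskian G).Adj (some (.inl u)) (some (.inr v)) ↔ G.Adj u v := by
  simp [Mycielskian, fromRel_adj]

@[simp] lemma mycielskian_adj_inr_inl :
    (Mycielskian G).Adj (some (.inr u)) (some (.inl v)) ↔ G.Adj v u := by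
  simp [Mycielskian, fromRel_adj]

@[simp] lemma mycielskian_adj_inr_inr :
    ¬ (Mycielskian G).Adj (some (.inr u)) (some (.inr v)) := by
  simp [Mycielskian, fromRel_adj]

@[simp] lemma mycielskian_adj_inr_none : (Mycielskian G).Adj (some (.inr u)) none := by
  simp [Mycielskian, fromRel_adj]

@[simp] lemma mycielskian_adj_none_inr : (Mycielskian G).Adj none (some (.inr u)) := by
  simp [Mycielskian, fromRel_adj]

@[simp] lemma mycielskian_adj_inl_none : ¬ (Mycielskian G).Adj (some (.inl u)) none := by
  simp [Mycielskian, fromRel_adj]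

@[simp] lemma mycielskian_adj_none_inl : ¬ (Mycielskian G).Adj none (some (.inl u)) := by
  simp [Mycielskian, fromRel_adj]

end Mycielskian

section GeneralPosition

variable {G : SimpleGraph V} {S : Set V}

lemma IsGPSet.adj_of_adj_of_adj (hS : IsGPSet G S) {x y z : V} (hx : x ∈ S) (hy : y ∈ S)
    (hz : z ∈ S) (hxz : G.Adj x z) (hzy : G.Adj z y) (hxy : x ≠ y) : G.Adj x y := by
  by_contra hnxy
  let p : G.Walk x y := .cons hxz (.cons hzy .nil)
  have hdist : G.dist x y = 2 := by
    have h0 : G.dist x y ≠ 0 := mt p.reachable.dist_eq_zero_iff.1 hxy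
    have h1 : G.dist x y ≠ 1 := mt dist_eq_one_iff_adj.1 hnxy
    have h2 : G.dist x y ≤ 2 := dist_le p
    omega
  rcases hS x hx y hy p hdist.symm z hz (by simp [p]) with rfl | rfl
  · exact hxz.ne rfl
  · exact hzy.ne rfl

lemma isGPSet_of_forall_dist_le_two (hdist : ∀ x ∈ S, ∀ y ∈ S, G.dist x y ≤ 2)
    (htrans : ∀ x ∈ S, ∀ y ∈ S, ∀ z ∈ S, G.Adj x z → G.Adj z y → x ≠ y → G.Adj x y) :
    IsGPSet G S := by
  intro x hx y hy p hp w hw hwp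
  rcases p with _ | ⟨hxz, _ | ⟨hzy, _ | ⟨_, q⟩⟩⟩
  · simp_all
  · simp_all
  · simp only [Walk.support_cons, Walk.support_nil, List.mem_cons, List.not_mem_nil,
      or_false] at hwp
    rcases hwp with rfl | rfl | rfl
    · exact .inl rfl
    · have hxy : x ≠ y := by rintro rfl; simp at hp
      have := htrans x hx y hy w hw hxz hzy hxy
      simp [(dist_eq_one_iff_adj).2 this] at hp
    · exact .inr rfl
  · have := hdist x hx y hy
    simp only [Walk.length_cons] at hp
    omega

variable [Fintype V] {T : Set V}

lemma gpNumber_eq_ncard (hT : IsGPSet G T) (hmax : ∀ S, IsGPSet G S → S.ncard ≤ T.ncard) :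
    gpNumber G = T.ncard :=
  IsGreatest.csSup_eq ⟨⟨T, hT, rfl⟩, by rintro _ ⟨S, hS, rfl⟩; exact hmax S hS⟩

lemma isGpSet_iff_eq (hT : IsGPSet G T)
    (hmax : ∀ S, IsGPSet G S → S ⊆ T ∨ S.ncard < T.ncard) : IsGpSet G S ↔ S = T := by
  have hgp : gpNumber G = T.ncard := gpNumber_eq_ncard hT fun S hS =>
    (hmax S hS).elim Set.ncard_le_ncard le_of_lt
  refine ⟨fun ⟨hS, hcard⟩ => ?_, fun h => h ▸ ⟨hT, hgp.symm⟩⟩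
  rcases hmax S hS with hsub | hlt
  · exact Set.eq_of_subset_of_ncard_le hsub (by omega)
  · omega

end GeneralPosition

lemma Set.ncard_le_of_subset_range {ι β : Type*} [Finite ι] {f : ι → β} {s : Set β}
    (h : s ⊆ Set.range f) : s.ncard ≤ Nat.card ι := by
  refine (Set.ncard_le_ncard h (Set.finite_range f)).trans ?_
  rw [← Set.image_univ]
  exact (Set.ncard_image_le Set.finite_univ).trans (Set.ncard_univ ι).le

lemma Set.ncard_le_three_of_subset {β : Type*} {s : Set β} {a b c : β} (h : s ⊆ {a, b, c}) :
    s.ncard ≤ 3 :=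
  calc s.ncard ≤ ({a, b, c} : Set β).ncard := Set.ncard_le_ncard h
    _ ≤ ({b, c} : Set β).ncard + 1 := Set.ncard_insert_le _ _
    _ ≤ ({c} : Set β).ncard + 1 + 1 := by gcongr; exact Set.ncard_insert_le _ _
    _ = 3 := by simp

section CompleteGraph

variable {α : Type*} {S : Set (Option (α ⊕ α))}

local notation "μK" => Mycielskian (⊤ : SimpleGraph α)

lemma dist_none_inl_le_two [Nontrivial α] (i : α) : (μK).dist none (some (.inl i)) ≤ 2 := by
  obtain ⟨j, hj⟩ := exists_ne i
  exact dist_le (.cons mycielskian_adj_none_inr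
    (.cons (mycielskian_adj_inr_inl.2 ((top_adj _ _).2 hj.symm)) .nil))

lemma isGPSet_insert_none_inl [Nontrivial α] :
    IsGPSet μK (insert none {x | ∃ v, x = some (Sum.inl v)}) := by
  refine isGPSet_of_forall_dist_le_two ?_ ?_
  · rintro x (rfl | ⟨i, rfl⟩) y (rfl | ⟨j, rfl⟩)
    · simp
    · exact dist_none_inl_le_two j
    · exact dist_comm.trans_le (dist_none_inl_le_two i)
    · rcases eq_or_ne i j with rfl | hij
      · simp
      · exact (dist_le (Adj.toWalk (by simpa using hij : (μK).Adj _ _))).trans (by simp)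
  · rintro x (rfl | ⟨i, rfl⟩) y (rfl | ⟨j, rfl⟩) z (rfl | ⟨k, rfl⟩) <;> simp

lemma ncard_insert_none_inl [Finite α] :
    (insert none {x | ∃ v, x = some (Sum.inl v)} : Set (Option (α ⊕ α))).ncard
      = Nat.card α + 1 := by
  have : {x : Option (α ⊕ α) | ∃ v, x = some (Sum.inl v)} = Set.range (some ∘ Sum.inl) := by
    ext; simp [eq_comm]
  rw [Set.ncard_insert_of_notMem (by simp), this,
    Set.ncard_range_of_injective ((Option.some_injective _).comp Sum.inl_injective)]

lemma subset_of_inl_mem_of_inr_mem [DecidableEq α] (hS : IsGPSet μK S) (hroot : none ∉ S)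
    {i j : α} (hi : some (.inl i) ∈ S) (hj : some (.inr j) ∈ S) (hij : i ≠ j) :
    S ⊆ {some (.inl i), some (.inr i), some (.inr j)} ∨
      S ⊆ Set.range (Function.update (some ∘ Sum.inl) j (some (.inr j))) := by
  have htwin : ∀ v, some (.inr v) ∈ S → v = i ∨ v = j := by
    intro v hv
    by_contra! hv'
    exact mycielskian_adj_inr_inr
      (hS.adj_of_adj_of_adj hv hj hi (by simpa using hv'.1.symm) (by simpa using hij)
        (by simpa using hv'.2))
  by_cases hii : some (.inr i) ∈ S
  · left
    rintro (_ | k | v) hx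
    · exact absurd hx hroot
    · by_contra hk
      simp only [Set.mem_insert_iff, Set.mem_singleton_iff, Option.some.injEq, Sum.inl.injEq,
        reduceCtorEq, or_false] at hk
      simpa using hS.adj_of_adj_of_adj hi hii hx (by simpa using Ne.symm hk) (by simpa using hk)
        (by simp)
    · rcases htwin v hx with rfl | rfl <;> simp
  · right
    have hjA : some (.inl j) ∉ S := fun hjA => by
      simpa using hS.adj_of_adj_of_adj hjA hj hi (by simpa using hij.symm) (by simpa using hij)
        (by simp)
    rintro (_ | k | v) hx
    · exact absurd hx hroot
    · exact ⟨k, by rw [Function.update_of_ne (by rintro rfl; exact hjA hx)]; rfl⟩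
    · obtain rfl : v = j := (htwin v hx).resolve_left (by rintro rfl; exact hii hx)
      exact ⟨v, by simp⟩

lemma subset_of_none_mem (hS : IsGPSet μK S) (hroot : none ∈ S) {u : α}
    (hu : some (.inr u) ∈ S) : S ⊆ {none, some (.inl u), some (.inr u)} := by
  rintro (_ | i | v) hx
  · simp
  · by_contra hi
    simp only [Set.mem_insert_iff, Set.mem_singleton_iff, Option.some.injEq, Sum.inl.injEq,
      reduceCtorEq, or_false, false_or] at hi
    simpa using hS.adj_of_adj_of_adj hx hroot hu (by simpa using hi) (by simp) (by simp)
  · by_contra hv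
    simp only [Set.mem_insert_iff, Set.mem_singleton_iff, Option.some.injEq, Sum.inr.injEq,
      reduceCtorEq, false_or] at hv
    simpa using hS.adj_of_adj_of_adj hx hu hroot (by simp) (by simp) (by simpa using hv)

lemma subset_insert_none_inl_or_ncard_le [Finite α] (hα : 3 ≤ Nat.card α)
    (hS : IsGPSet μK S) :
    S ⊆ insert none {x | ∃ v, x = some (Sum.inl v)} ∨ S.ncard ≤ Nat.card α := by
  classical
  by_cases htwin : ∃ u, some (.inr u) ∈ S
  swap
  · push Not at htwin
    left
    rintro (_ | i | u) hx
    · simp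
    · simp
    · exact absurd hx (htwin u)
  right
  obtain ⟨u, hu⟩ := htwin
  by_cases hroot : none ∈ S
  · exact (Set.ncard_le_three_of_subset (subset_of_none_mem hS hroot hu)).trans hα
  by_cases hmix : ∃ i j, i ≠ j ∧ some (.inl i) ∈ S ∧ some (.inr j) ∈ S
  · obtain ⟨i, j, hij, hi, hj⟩ := hmix
    rcases subset_of_inl_mem_of_inr_mem hS hroot hi hj hij with h | h
    · exact (Set.ncard_le_three_of_subset h).trans hα
    · exact Set.ncard_le_of_subset_range h
  have hsame : ∀ i j, some (.inl i) ∈ S → some (.inr j) ∈ S → i = j :=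
    fun i j hi hj => not_not.1 fun hij => hmix ⟨i, j, hij, hi, hj⟩
  by_cases horig : ∃ i, some (.inl i) ∈ S
  · obtain ⟨i, hi⟩ := horig
    have hsub : S ⊆ {none, some (.inl u), some (.inr u)} := by
      rintro (_ | k | v) hx
      · simp
      · simp [hsame k u hx hu]
      · simp [← hsame i v hi hx, hsame i u hi hu]
    exact (Set.ncard_le_three_of_subset hsub).trans hα
  · push Not at horig
    refine Set.ncard_le_of_subset_range (f := some ∘ Sum.inr) ?_
    rintro (_ | k | v) hx
    · exact absurd hx hroot
    · exact absurd hx (horig k)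
    · exact ⟨v, rfl⟩

end CompleteGraph

/-- For `n ≥ 3`, `gp(μ(K_n)) = n + 1`, and the unique gp-set of `μ(K_n)`
is `V ∪ {u*}`, the set of original vertices together with the root. -/
theorem gpNumber_mycielskian_complete (n : ℕ) (hn : 3 ≤ n) :
    gpNumber (Mycielskian (⊤ : SimpleGraph (Fin n))) = n + 1 ∧
    ∀ S : Set (Option (Fin n ⊕ Fin n)),
      IsGpSet (Mycielskian (⊤ : SimpleGraph (Fin n))) S ↔
        S = insert none {x | ∃ v : Fin n, x = some (Sum.inl v)} := by
  have : Nontrivial (Fin n) := Fin.nontrivial_iff_two_le.2 (by omega)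
  set T : Set (Option (Fin n ⊕ Fin n)) := insert none {x | ∃ v : Fin n, x = some (Sum.inl v)}
  have hT : IsGPSet (Mycielskian ⊤) T := isGPSet_insert_none_inl
  have hcard : T.ncard = n + 1 := by rw [ncard_insert_none_inl, Nat.card_fin]
  have hmax : ∀ S, IsGPSet (Mycielskian ⊤) S → S ⊆ T ∨ S.ncard < T.ncard := fun S hS => by
    simpa [hcard, Nat.lt_succ_iff] using subset_insert_none_inl_or_ncard_le (by simpa) hS
  refine ⟨hcard ▸ gpNumber_eq_ncard hT fun S hS => ?_, fun S => isGpSet_iff_eq hT hmax⟩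
  exact (hmax S hS).elim Set.ncard_le_ncard le_of_lt
end

section
/- If (V1, V2, V3, V4) is a Mycielski partition of a finite simple graph G, then V1 is an independent set of G, there are no edges between V1 and V3, and the set of edges between V1 and V2 forms a matching (i.e., no two of these edges share an endpoint). -/
open SimpleGraph

variable {V : Type*}

/-- The path `f 0, f 1, …, f n` has one of the three special forms of Condition 3
of the definition of a Mycielski partition. -/
def HasSpecialForm (V1 V2 V3 : Set V) (n : ℕ) (f : ℕ → V) : Prop :=
  (n = 4 ∧ f 0 ∈ V2 ∧ f 4 ∈ V1 ∪ V3 ∧ f 3 ∉ V1 ∪ V2) ∨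
  (n = 3 ∧ f 0 ∈ V2 ∧ f 1 ∈ V2 ∧ f 3 ∈ V1 ∪ V3) ∨
  (n = 2 ∧ f 0 ∈ V2 ∧ f 1 ∈ V2)

/-- `(V1, V2, V3, V4)` is a Mycielski partition of the graph `G`. -/
structure IsMycielskiPartition (G : SimpleGraph V) (V1 V2 V3 V4 : Set V) : Prop where
  /-- The four sets cover the vertex set. -/
  cover : V1 ∪ V2 ∪ V3 ∪ V4 = Set.univ
  /-- The four sets are pairwise disjoint. -/
  disjoint : List.Pairwise Disjoint [V1, V2, V3, V4]
  /-- Condition 1: every edge of the subgraph induced by `V1 ∪ V3` has both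
  endpoints in `V3`. -/
  cond1 : ∀ u v, G.Adj u v → u ∈ V1 ∪ V3 → v ∈ V1 ∪ V3 → u ∈ V3 ∧ v ∈ V3
  /-- Condition 2: if `u ∈ V1 ∪ V3` has a neighbour `v ∈ V2`, then `d(u,w) = 2` for all
  `w ∈ (V1 ∪ V2) \ {u, v}` and `d(u,w) ≤ 3` for all `w ∈ V3 \ {u}`. -/
  cond2 : ∀ u ∈ V1 ∪ V3, ∀ v ∈ V2, G.Adj u v →
    (∀ w ∈ V1 ∪ V2, w ≠ u → w ≠ v → G.dist u w = 2) ∧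
    (∀ w ∈ V3, w ≠ u → G.dist u w ≤ 3)
  /-- Condition 3: any shortest path of length `≤ 4` between vertices of `V1 ∪ V2 ∪ V3`
  passing through a further vertex of `V1 ∪ V2 ∪ V3` either joins two vertices of `V2` and
  has length `≥ 3`, or (possibly after reversal) has one of the three special forms. -/
  cond3 : ∀ u v, ∀ p : G.Walk u v, p.IsPath → p.length = G.dist u v → p.length ≤ 4 →
    u ∈ V1 ∪ V2 ∪ V3 → v ∈ V1 ∪ V2 ∪ V3 →
    (∃ w ∈ p.support, w ≠ u ∧ w ≠ v ∧ w ∈ V1 ∪ V2 ∪ V3) →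
    ((u ∈ V2 ∧ v ∈ V2 ∧ 3 ≤ p.length) ∨
     HasSpecialForm V1 V2 V3 p.length p.getVert ∨
     HasSpecialForm V1 V2 V3 p.length (fun i => p.getVert (p.length - i)))

/-- In a Mycielski partition `(V1, V2, V3, V4)` of `G`, `V1` is an
independent set, there are no edges between `V1` and `V3`, and the edges between
`V1` and `V2` form a matching. -/
theorem mycielskiPartition_structure (G : SimpleGraph V) (V1 V2 V3 V4 : Set V)
    (h : IsMycielskiPartition G V1 V2 V3 V4) :
    (∀ u ∈ V1, ∀ v ∈ V1, ¬ G.Adj u v) ∧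
    (∀ u ∈ V1, ∀ v ∈ V3, ¬ G.Adj u v) ∧
    (∀ u ∈ V1, ∀ u' ∈ V1, ∀ v ∈ V2, ∀ v' ∈ V2,
      G.Adj u v → G.Adj u' v' → (u = u' ↔ v = v')) := by
  obtain ⟨hcov, hdisj, h1, h2, h3⟩ := h
  have d12 : Disjoint V1 V2 := by
    simp only [List.pairwise_cons] at hdisj; exact hdisj.1 V2 (by simp)
  have d13 : Disjoint V1 V3 := by
    simp only [List.pairwise_cons] at hdisj; exact hdisj.1 V3 (by simp)
  have noE11 : ∀ u ∈ V1, ∀ v ∈ V1, ¬ G.Adj u v := by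
    intro u hu v hv hadj
    exact d13.le_bot ⟨hu, (h1 u v hadj (Or.inl hu) (Or.inl hv)).1⟩
  have noE13 : ∀ u ∈ V1, ∀ v ∈ V3, ¬ G.Adj u v := by
    intro u hu v hv hadj
    exact d13.le_bot ⟨hu, (h1 u v hadj (Or.inl hu) (Or.inr hv)).1⟩
  refine ⟨noE11, noE13, ?_⟩
  intro u hu u' hu' v hv v' hv' huv hu'v'
  have hune : ∀ x ∈ V1, ∀ y ∈ V2, x ≠ y := by
    intro x hx y hy hxy; exact d12.le_bot ⟨hx, hxy ▸ hy⟩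
  constructor
  · rintro rfl
    by_contra hne
    have hd2 := (h2 u (Or.inl hu) v hv huv).1 v' (Or.inr hv')
      (Ne.symm (hune u hu v' hv')) (fun hc => hne hc.symm)
    have hle : G.dist u v' ≤ 1 := by
      simpa using SimpleGraph.dist_le (SimpleGraph.Walk.cons hu'v' SimpleGraph.Walk.nil)
    omega
  · rintro rfl
    by_contra hne
    have huu' : u ≠ u' := hne
    have hdist : G.dist u u' = 2 := (h2 u (Or.inl hu) v hv huv).1 u' (Or.inl hu')
      (Ne.symm huu') (hune u' hu' v hv)
    set p : G.Walk u u' := SimpleGraph.Walk.cons huv (SimpleGraph.Walk.cons hu'v'.symm SimpleGraph.Walk.nil) with hp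
    have hlen : p.length = 2 := rfl
    have hpath : p.IsPath := by
      rw [SimpleGraph.Walk.isPath_def]
      simp [hp, SimpleGraph.Walk.support, huv.ne, huu', hu'v'.ne']
    have hmem : v ∈ p.support := by simp [hp]
    have := h3 u u' p hpath (by omega) (by omega)
      (Or.inl (Or.inl hu)) (Or.inl (Or.inl hu'))
      ⟨v, hmem, Ne.symm (hune u hu v hv), Ne.symm (hune u' hu' v hv), Or.inl (Or.inr hv)⟩
    have hg0 : p.getVert 0 = u := rfl
    have hg2 : p.getVert 2 = u' := rfl
    rcases this with ⟨huv2, _⟩ | hsf | hsf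
    · exact hune u hu u huv2 rfl
    · rcases hsf with ⟨hn, _⟩ | ⟨hn, _⟩ | ⟨_, hf0, _⟩
      · omega
      · omega
      · rw [hg0] at hf0; exact hune u hu u hf0 rfl
    · rcases hsf with ⟨hn, _⟩ | ⟨hn, _⟩ | ⟨_, hf0, _⟩
      · rw [hlen] at hn; omega
      · rw [hlen] at hn; omega
      · simp only [hlen, Nat.sub_zero, hg2] at hf0
        exact hune u' hu' u' hf0 rfl
end

section
/- Let K_{r1,r2,…,rk} be a complete k-partite graph of order n = r1 + r2 + ⋯ + rk, where 2 ≤ k < n and r1 ≥ r2 ≥ ⋯ ≥ rk ≥ 1. Then gp(μ(K_{r1,r2,…,rk})) = max{n, 2·r1}. -/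
open SimpleGraph

variable {V : Type*}

/-!
In a general position set `S` of any graph, `a, c, b ∈ S` with `a ~ c ~ b` force `a ~ b`, as
`a - c - b` would otherwise be a shortest path through `c`. In `μ(K)`, `K` complete multipartite,
this leaves few configurations for the originals `A`, the twins `B` and the root of `S`. If the
root is in `S`, then `|B| ≤ 1`, and `A` lies in the part of the twin when there is one. If not,
either `A` is a transversal of at least two parts, and then `|B| ≤ 1`; or `A` lies in one part,
and then so do all twins but at most one, all of them if `|A| ≥ 2`. Each case gives at most
`max (n, 2 r₁)`, using `k < n` (which also forces `r₁ ≥ 2`). Conversely, all twins, and a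
largest part together with its twins, are independent sets any two vertices of which have a
common neighbour, hence are in general position.
-/

section Sigma

variable {ι : Type*} {V : ι → Type*}

lemma ncard_le_card_of_forall_fst_eq {i : ι} [Finite (V i)] {s : Set (Σ i, V i)}
    (h : ∀ x ∈ s, x.1 = i) : s.ncard ≤ Nat.card (V i) := by
  calc s.ncard ≤ (Set.range (Sigma.mk i)).ncard := Set.ncard_le_ncard fun x hx => by
        obtain ⟨j, a⟩ := x
        obtain rfl : j = i := h _ hx
        exact ⟨a, rfl⟩
    _ = Nat.card (V i) := by rw [Set.ncard_range_of_injective sigma_mk_injective]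

lemma ncard_le_card_of_injOn_fst [Finite ι] {s : Set (Σ i, V i)} (h : s.InjOn Sigma.fst) :
    s.ncard ≤ Nat.card ι :=
  h.ncard_image.symm.trans_le (Set.ncard_le_card _)

lemma two_le_of_card_lt_card_sigma [Finite ι] [∀ i, Finite (V i)] {m : ℕ}
    (hm : ∀ i, Nat.card (V i) ≤ m) (hι : Nat.card ι < Nat.card (Σ i, V i)) : 2 ≤ m := by
  by_contra! h
  have : ∀ i, Subsingleton (V i) := fun i => Finite.card_le_one_iff_subsingleton.mp ((hm i).trans (by omega))
  exact hι.not_ge (Nat.card_le_card_of_injective Sigma.fst fun a b hab => Sigma.ext hab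
    (by obtain ⟨i, a⟩ := a; obtain ⟨j, b⟩ := b; subst hab; simp [Subsingleton.elim a b]))

end Sigma

lemma SimpleGraph.Walk.eq_or_eq_or_adj_of_mem_support {X : Type*} {H : SimpleGraph X}
    {u v w : X} (p : H.Walk u v) (hp : p.length ≤ 2) (hw : w ∈ p.support) :
    w = u ∨ w = v ∨ H.Adj u w := by
  rcases p with _ | ⟨h₁, _ | ⟨h₂, _ | ⟨h₃, q⟩⟩⟩ <;> simp at hp hw <;> aesop

namespace IsGPSet

variable {X : Type*} {H : SimpleGraph X} {S : Set X}

lemma empty : IsGPSet H ∅ := fun _ h => h.elim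

lemma adj_of_adj_of_adj_s6 (hS : IsGPSet H S) {a b c : X} (ha : a ∈ S) (hb : b ∈ S) (hc : c ∈ S)
    (hab : a ≠ b) (hac : H.Adj a c) (hcb : H.Adj c b) : H.Adj a b := by
  by_contra hnab
  let p : H.Walk a b := .cons hac (.cons hcb .nil)
  have hdist : H.dist a b = 2 := by
    have h₂ : H.dist a b ≤ 2 := H.dist_le p
    have h₀ : H.dist a b ≠ 0 := fun h => hab ((Reachable.dist_eq_zero_iff ⟨p⟩).mp h)
    have h₁ : H.dist a b ≠ 1 := fun h => hnab (dist_eq_one_iff_adj.mp h)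
    omega
  rcases hS a ha b hb p hdist.symm c hc (by simp [p]) with rfl | rfl
  · exact hac.ne rfl
  · exact hcb.ne rfl

lemma of_isIndepSet (hI : H.IsIndepSet S)
    (hc : ∀ a ∈ S, ∀ b ∈ S, a ≠ b → ∃ c, H.Adj a c ∧ H.Adj c b) : IsGPSet H S := by
  intro u hu v hv p hp w hw hwp
  have hlen : p.length ≤ 2 := by
    rw [hp]
    obtain rfl | huv := eq_or_ne u v
    · simp
    · obtain ⟨c, huc, hcv⟩ := hc u hu v hv huv
      exact H.dist_le (.cons huc (.cons hcv .nil))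
  rcases p.eq_or_eq_or_adj_of_mem_support hlen hwp with h | h | h
  · exact .inl h
  · exact .inr h
  · exact absurd h (hI hu hw h.ne)

lemma ncard_le_gpNumber [Fintype X] (hS : IsGPSet H S) : S.ncard ≤ gpNumber H :=
  le_csSup ⟨Nat.card X, by rintro _ ⟨T, -, rfl⟩; exact Set.ncard_le_card T⟩ ⟨S, hS, rfl⟩

end IsGPSet

lemma gpNumber_le {X : Type*} [Fintype X] {H : SimpleGraph X} {N : ℕ}
    (h : ∀ S, IsGPSet H S → S.ncard ≤ N) : gpNumber H ≤ N :=
  csSup_le ⟨0, ∅, .empty, Set.ncard_empty _⟩ (by rintro _ ⟨S, hS, rfl⟩; exact h S hS)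

namespace Mycielskian

section General

variable {W : Type*} {G : SimpleGraph W}

section Adj

variable {u v : W}

@[simp] lemma adj_inl_inl : (Mycielskian G).Adj (some (.inl u)) (some (.inl v)) ↔ G.Adj u v := by
  simp [Mycielskian, G.adj_comm v u]
  exact Adj.ne

@[simp] lemma adj_inl_inr : (Mycielskian G).Adj (some (.inl u)) (some (.inr v)) ↔ G.Adj u v := by
  simp [Mycielskian]

@[simp] lemma adj_inr_inl : (Mycielskian G).Adj (some (.inr u)) (some (.inl v)) ↔ G.Adj v u := by
  simp [Mycielskian]

@[simp] lemma not_adj_inr_inr : ¬(Mycielskian G).Adj (some (.inr u)) (some (.inr v)) := by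
  simp [Mycielskian]

@[simp] lemma adj_inr_none : (Mycielskian G).Adj (some (.inr u)) none := by
  simp [Mycielskian]

@[simp] lemma adj_none_inr : (Mycielskian G).Adj none (some (.inr u)) := by
  simp [Mycielskian]

@[simp] lemma not_adj_inl_none : ¬(Mycielskian G).Adj (some (.inl u)) none := by
  simp [Mycielskian]

@[simp] lemma not_adj_none_inl : ¬(Mycielskian G).Adj none (some (.inl u)) := by
  simp [Mycielskian]

end Adj

def originals (S : Set (Option (W ⊕ W))) : Set W := {u | some (.inl u) ∈ S}

def twins (S : Set (Option (W ⊕ W))) : Set W := {u | some (.inr u) ∈ S}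

open Classical in
lemma ncard_le_ncard_originals_add_ncard_twins [Finite W] (S : Set (Option (W ⊕ W))) :
    S.ncard ≤ (originals S).ncard + (twins S).ncard + if none ∈ S then 1 else 0 := by
  set T : Set (Option (W ⊕ W)) :=
    (fun u => some (.inl u)) '' originals S ∪ (fun u => some (.inr u)) '' twins S
  have hT : T.ncard ≤ (originals S).ncard + (twins S).ncard :=
    (Set.ncard_union_le _ _).trans (add_le_add Set.ncard_image_le Set.ncard_image_le)
  split_ifs with h0
  · calc S.ncard ≤ (insert none T).ncard :=
          Set.ncard_le_ncard (by rintro (_ | _ | _) hx <;> simp_all [T, originals, twins])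
      _ ≤ _ := by grw [Set.ncard_insert_le, hT]
  · calc S.ncard ≤ T.ncard :=
          Set.ncard_le_ncard (by rintro (_ | _ | _) hx <;> simp_all [T, originals, twins])
      _ ≤ _ := hT

lemma twins_subsingleton_of_none_mem {S : Set (Option (W ⊕ W))}
    (hS : IsGPSet (Mycielskian G) S) (h0 : none ∈ S) : (twins S).Subsingleton := by
  intro u hu v hv
  by_contra huv
  exact not_adj_inr_inr
    (hS.adj_of_adj_of_adj_s6 hu hv h0 (by simpa using huv) adj_inr_none adj_none_inr)

lemma card_le_gpNumber [Fintype W] (G : SimpleGraph W) :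
    Nat.card W ≤ gpNumber (Mycielskian G) := by
  have hS : IsGPSet (Mycielskian G) (Set.range fun u => some (.inr u)) :=
    .of_isIndepSet (by rintro _ ⟨u, rfl⟩ _ ⟨v, rfl⟩ -; simp)
      (by rintro _ ⟨u, rfl⟩ _ ⟨v, rfl⟩ -; exact ⟨none, by simp, by simp⟩)
  have hcard := hS.ncard_le_gpNumber
  rwa [Set.ncard_range_of_injective fun a b h => by simpa using h] at hcard

lemma two_mul_ncard_le_gpNumber [Fintype W] {I : Set W} (hI : G.IsIndepSet I) {c : W}
    (hc : ∀ a ∈ I, G.Adj a c) : 2 * I.ncard ≤ gpNumber (Mycielskian G) := by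
  have hI' : ∀ a ∈ I, ∀ b ∈ I, ¬G.Adj a b := fun a ha b hb h => hI ha hb h.ne h
  have hS : IsGPSet (Mycielskian G)
      ((fun u => some (.inl u)) '' I ∪ (fun u => some (.inr u)) '' I) := by
    refine .of_isIndepSet ?_ ?_
    · rintro _ (⟨a, ha, rfl⟩ | ⟨a, ha, rfl⟩) _ (⟨b, hb, rfl⟩ | ⟨b, hb, rfl⟩) - <;>
        simp [hI' a ha b hb, hI' b hb a ha]
    · rintro _ (⟨a, ha, rfl⟩ | ⟨a, ha, rfl⟩) _ (⟨b, hb, rfl⟩ | ⟨b, hb, rfl⟩) - <;>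
        exact ⟨some (.inl c), by simp [hc a ha, (hc a ha).symm], by simp [(hc b hb).symm]⟩
  have hcard := hS.ncard_le_gpNumber
  rwa [Set.ncard_union_eq (by simp [Set.disjoint_left]),
    Set.ncard_image_of_injective _ (by intro a b; simp),
    Set.ncard_image_of_injective _ (by intro a b; simp), ← two_mul] at hcard

end General

section CompleteMultipartite

variable {ι : Type*} {V : ι → Type*} {S : Set (Option ((Σ i, V i) ⊕ (Σ i, V i)))}
  {x y z u v : Σ i, V i}

lemma two_mul_card_le_gpNumber_completeMultipartite [Fintype ι] [∀ i, Fintype (V i)] {i j : ι}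
    (hij : i ≠ j) (c : V j) :
    2 * Nat.card (V i) ≤ gpNumber (Mycielskian (completeMultipartiteGraph V)) := by
  have hI : (completeMultipartiteGraph V).IsIndepSet (Set.range (Sigma.mk i)) := by
    rintro _ ⟨a, rfl⟩ _ ⟨b, rfl⟩ -
    simp
  have hcard :=
    two_mul_ncard_le_gpNumber hI (c := ⟨j, c⟩) (by rintro _ ⟨a, rfl⟩; simpa using hij)
  rwa [Set.ncard_range_of_injective sigma_mk_injective] at hcard

variable (hS : IsGPSet (Mycielskian (completeMultipartiteGraph V)) S)
include hS
lemma fst_eq_of_mem_originals_of_fst_eq (hx : x ∈ originals S) (hy : y ∈ originals S)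
    (hz : z ∈ originals S) (hxy : x ≠ y) (h : x.1 = y.1) : z.1 = x.1 := by
  by_contra hzx
  have := hS.adj_of_adj_of_adj_s6 hx hy hz (by simpa using hxy) (by simpa using Ne.symm hzx)
    (by simpa [← h] using hzx)
  simp_all

lemma fst_eq_or_fst_eq_of_mem_twins (hu : u ∈ twins S) (hv : v ∈ twins S) (huv : u ≠ v)
    (hx : x ∈ originals S) : x.1 = u.1 ∨ x.1 = v.1 := by
  by_contra! h
  exact not_adj_inr_inr (hS.adj_of_adj_of_adj_s6 hu hv hx (by simpa using huv)
    (by simpa using h.1) (by simpa using h.2))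

lemma injOn_fst_originals (hx : x ∈ originals S) (hy : y ∈ originals S) (hxy : x.1 ≠ y.1) :
    (originals S).InjOn Sigma.fst := by
  intro a ha b hb hab
  by_contra hne
  exact hxy ((fst_eq_of_mem_originals_of_fst_eq hS ha hb hx hne hab).trans
    (fst_eq_of_mem_originals_of_fst_eq hS ha hb hy hne hab).symm)

lemma ncard_originals_le_of_fst_eq [∀ i, Finite (V i)] (hx : x ∈ originals S)
    (hy : y ∈ originals S) (hxy : x ≠ y) (h : x.1 = y.1) :
    (originals S).ncard ≤ Nat.card (V x.1) :=
  ncard_le_card_of_forall_fst_eq fun _ hz => fst_eq_of_mem_originals_of_fst_eq hS hx hy hz hxy h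

lemma ncard_twins_le_of_fst_eq [∀ i, Finite (V i)] (hx : x ∈ originals S)
    (hy : y ∈ originals S) (hxy : x ≠ y) (h : x.1 = y.1) :
    (twins S).ncard ≤ Nat.card (V x.1) := by
  refine ncard_le_card_of_forall_fst_eq fun u hu => ?_
  by_contra hxu
  have := hS.adj_of_adj_of_adj_s6 hx hy hu (by simpa using hxy) (by simpa [eq_comm] using hxu)
    (by simpa [← h, eq_comm] using hxu)
  simp_all

lemma twins_subsingleton_of_fst_ne (hx : x ∈ originals S) (hy : y ∈ originals S)
    (hxy : x.1 ≠ y.1) : (twins S).Subsingleton := by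
  have hfst : ∀ u ∈ twins S, ∀ z ∈ originals S, z.1 ≠ u.1 := by
    intro u hu z hz hzu
    have hxz : x.1 = z.1 := by
      by_contra hxz
      have := hS.adj_of_adj_of_adj_s6 hz hu hx (by simp) (by simpa [eq_comm] using hxz)
        (by simpa [← hzu] using hxz)
      simp_all
    have hyz : y.1 = z.1 := by
      by_contra hyz
      have := hS.adj_of_adj_of_adj_s6 hz hu hy (by simp) (by simpa [eq_comm] using hyz)
        (by simpa [← hzu] using hyz)
      simp_all
    exact hxy (hxz.trans hyz.symm)
  intro u hu v hv
  by_contra huv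
  rcases fst_eq_or_fst_eq_of_mem_twins hS hu hv huv hx with h | h
  exacts [hfst u hu x hx h, hfst v hv x hx h]

lemma ncard_twins_le_of_mem_originals [Finite ι] [∀ i, Finite (V i)] (hx : x ∈ originals S) :
    (twins S).ncard ≤ Nat.card (V x.1) + 1 := by
  have hout : {u ∈ twins S | u.1 ≠ x.1}.Subsingleton := by
    intro u ⟨hu, hux⟩ v ⟨hv, hvx⟩
    by_contra huv
    rcases fst_eq_or_fst_eq_of_mem_twins hS hu hv huv hx with h | h
    exacts [hux h.symm, hvx h.symm]
  calc (twins S).ncard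
        ≤ {u ∈ twins S | u.1 = x.1}.ncard + {u ∈ twins S | u.1 ≠ x.1}.ncard :=
          (Set.ncard_le_ncard (fun u hu => by by_cases h : u.1 = x.1 <;> simp_all)).trans
            (Set.ncard_union_le _ _)
    _ ≤ Nat.card (V x.1) + 1 := add_le_add (ncard_le_card_of_forall_fst_eq fun u hu => hu.2)
        (Set.ncard_le_one_iff_subsingleton.mpr hout)

lemma ncard_originals_le_of_none_mem [∀ i, Finite (V i)] (h0 : none ∈ S) (hu : u ∈ twins S) :
    (originals S).ncard ≤ Nat.card (V u.1) := by
  refine ncard_le_card_of_forall_fst_eq fun x hx => ?_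
  by_contra hxu
  exact not_adj_inl_none (hS.adj_of_adj_of_adj_s6 hx h0 hu (by simp) (by simpa using hxu)
    adj_inr_none)

variable {m : ℕ} (hm : ∀ i, Nat.card (V i) ≤ m)
include hm

lemma ncard_originals_le [Finite ι] [∀ i, Finite (V i)] :
    (originals S).ncard ≤ max (Nat.card ι) m := by
  rcases (originals S).eq_empty_or_nonempty with hA | ⟨x, hx⟩
  · simp [hA]
  by_cases h : ∀ y ∈ originals S, y.1 = x.1
  · exact le_max_of_le_right ((ncard_le_card_of_forall_fst_eq h).trans (hm _))
  · push Not at h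
    obtain ⟨y, hy, hyx⟩ := h
    exact le_max_of_le_left
      (ncard_le_card_of_injOn_fst (injOn_fst_originals hS hx hy hyx.symm))

variable [Finite ι] [∀ i, Finite (V i)] (hm2 : 2 ≤ m)
  (hι : Nat.card ι < Nat.card (Σ i, V i))
include hm2 hι

lemma ncard_originals_add_ncard_twins_add_one_le (h0 : none ∈ S) :
    (originals S).ncard + (twins S).ncard + 1 ≤ max (Nat.card (Σ i, V i)) (2 * m) := by
  rcases (twins S).eq_empty_or_nonempty with hB | ⟨u, hu⟩
  · have hA := ncard_originals_le hS hm
    simp only [hB, Set.ncard_empty]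
    omega
  · have hA := (ncard_originals_le_of_none_mem hS h0 hu).trans (hm _)
    have hB := Set.ncard_le_one_iff_subsingleton.mpr (twins_subsingleton_of_none_mem hS h0)
    omega

lemma ncard_originals_add_ncard_twins_le :
    (originals S).ncard + (twins S).ncard ≤ max (Nat.card (Σ i, V i)) (2 * m) := by
  rcases (originals S).subsingleton_or_nontrivial with hA | ⟨x, hx, y, hy, hxy⟩
  · rcases hA.eq_empty_or_singleton with hA0 | ⟨x, hAx⟩
    · have hB := Set.ncard_le_card (twins S)
      simp only [hA0, Set.ncard_empty]
      omega
    · have hB := ncard_twins_le_of_mem_originals hS (x := x) (by simp [hAx])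
      have hmx := hm x.1
      simp only [hAx, Set.ncard_singleton]
      omega
  by_cases h : x.1 = y.1
  · have hA := ncard_originals_le_of_fst_eq hS hx hy hxy h
    have hB := ncard_twins_le_of_fst_eq hS hx hy hxy h
    have hmx := hm x.1
    omega
  · have hA := ncard_le_card_of_injOn_fst (injOn_fst_originals hS hx hy h)
    have hB := Set.ncard_le_one_iff_subsingleton.mpr (twins_subsingleton_of_fst_ne hS hx hy h)
    omega

end CompleteMultipartite

end Mycielskian

open Mycielskian in
lemma gpNumber_mycielskian_completeMultipartite_le {ι : Type*} {V : ι → Type*}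
    [Fintype ι] [∀ i, Fintype (V i)] {m : ℕ} (hm : ∀ i, Nat.card (V i) ≤ m)
    (hι : Nat.card ι < Nat.card (Σ i, V i)) :
    gpNumber (Mycielskian (completeMultipartiteGraph V)) ≤
      max (Nat.card (Σ i, V i)) (2 * m) := by
  classical
  have hm2 := two_le_of_card_lt_card_sigma hm hι
  refine gpNumber_le fun S hS => (ncard_le_ncard_originals_add_ncard_twins S).trans ?_
  split_ifs with h0
  · exact ncard_originals_add_ncard_twins_add_one_le hS hm hm2 hι h0
  · simpa using ncard_originals_add_ncard_twins_le hS hm hm2 hι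

/-- For a complete `k`-partite graph `K_{r1,…,rk}` of order
`n = r1 + … + rk` with `2 ≤ k < n` and `r1 ≥ r2 ≥ … ≥ rk ≥ 1`,
`gp(μ(K_{r1,…,rk})) = max {n, 2 r1}`. -/
theorem gpNumber_mycielskian_completeMultipartite {k : ℕ} (r : Fin k → ℕ)
    (hk : 2 ≤ k) (hr : ∀ i, 1 ≤ r i) (hmono : Antitone r) (hkn : k < ∑ i, r i) :
    gpNumber (Mycielskian (SimpleGraph.completeMultipartiteGraph (fun i => Fin (r i)))) =
      max (∑ i, r i) (2 * r ⟨0, by omega⟩) := by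
  have hcard : Nat.card (Σ i, Fin (r i)) = ∑ i, r i := by simp [Nat.card_eq_fintype_card]
  refine le_antisymm ?_ (max_le ?_ ?_)
  · have hm (i : Fin k) : Nat.card (Fin (r i)) ≤ r ⟨0, by omega⟩ := by
      simpa using hmono (Nat.zero_le i.val)
    simpa [hcard] using
      gpNumber_mycielskian_completeMultipartite_le hm (by simpa [hcard] using hkn)
  · simpa [hcard] using
      Mycielskian.card_le_gpNumber (completeMultipartiteGraph fun i => Fin (r i))
  · simpa using Mycielskian.two_mul_card_le_gpNumber_completeMultipartite
      (V := fun i => Fin (r i)) (i := ⟨0, by omega⟩) (j := ⟨1, by omega⟩) (by simp)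
      ⟨0, hr _⟩
end

section
/- For any non-complete finite simple graph G of order n, with independence number α and minimum degree δ ≥ 1, we have gp(μ(G)) ≤ n + max{0, α − δ + 1}. -/
open SimpleGraph

variable {V : Type*}

/-- The independence number of `G`. -/
noncomputable def indepNumber (G : SimpleGraph V) [Fintype V] : ℕ :=
  sSup {k | ∃ S : Set V, (∀ u ∈ S, ∀ v ∈ S, ¬ G.Adj u v) ∧ S.ncard = k}


section AdjLemmas

variable {G : SimpleGraph V}

lemma myc_adj_inl_inl {u v : V} :
    (Mycielskian G).Adj (some (Sum.inl u)) (some (Sum.inl v)) ↔ G.Adj u v := by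
  rw [Mycielskian, fromRel_adj]
  constructor
  · rintro ⟨hne, h | h⟩ <;>
      rcases h with ⟨a, b, hab, ha, hb⟩ | ⟨a, b, hab, ha, hb⟩ | ⟨a, ha, hb⟩ <;>
      simp_all <;> exact hab.symm
  · intro h
    exact ⟨by simp [h.ne], Or.inl (Or.inl ⟨u, v, h, rfl, rfl⟩)⟩

lemma myc_adj_inl_inr {u v : V} :
    (Mycielskian G).Adj (some (Sum.inl u)) (some (Sum.inr v)) ↔ G.Adj u v := by
  rw [Mycielskian, fromRel_adj]
  constructor
  · rintro ⟨hne, h | h⟩ <;>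
      rcases h with ⟨a, b, hab, ha, hb⟩ | ⟨a, b, hab, ha, hb⟩ | ⟨a, ha, hb⟩ <;>
      simp_all
  · intro h
    exact ⟨by simp, Or.inl (Or.inr (Or.inl ⟨u, v, h, rfl, rfl⟩))⟩

lemma myc_adj_inr_inl {u v : V} :
    (Mycielskian G).Adj (some (Sum.inr u)) (some (Sum.inl v)) ↔ G.Adj v u := by
  rw [(Mycielskian G).adj_comm]; exact myc_adj_inl_inr

lemma myc_not_adj_inr_inr {u v : V} :
    ¬ (Mycielskian G).Adj (some (Sum.inr u)) (some (Sum.inr v)) := by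
  rw [Mycielskian, fromRel_adj]
  rintro ⟨hne, h | h⟩ <;>
    rcases h with ⟨a, b, hab, ha, hb⟩ | ⟨a, b, hab, ha, hb⟩ | ⟨a, ha, hb⟩ <;> simp_all

lemma myc_adj_inr_none {u : V} :
    (Mycielskian G).Adj (some (Sum.inr u)) none := by
  rw [Mycielskian, fromRel_adj]
  exact ⟨by simp, Or.inl (Or.inr (Or.inr ⟨u, rfl, rfl⟩))⟩

lemma myc_adj_none_inr {u : V} :
    (Mycielskian G).Adj none (some (Sum.inr u)) := myc_adj_inr_none.symm

lemma myc_not_adj_none_inl {u : V} :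
    ¬ (Mycielskian G).Adj none (some (Sum.inl u)) := by
  rw [Mycielskian, fromRel_adj]
  rintro ⟨hne, h | h⟩ <;>
    rcases h with ⟨a, b, hab, ha, hb⟩ | ⟨a, b, hab, ha, hb⟩ | ⟨a, ha, hb⟩ <;> simp_all

end AdjLemmas

section Helpers

lemma dist_eq_two'_s7 {W : Type*} {H : SimpleGraph W} {x y m : W} (hxy : x ≠ y)
    (hna : ¬ H.Adj x y) (h1 : H.Adj x m) (h2 : H.Adj m y) : H.dist x y = 2 := by
  have hle : H.dist x y ≤ 2 := by
    simpa using dist_le (Walk.cons h1 (Walk.cons h2 Walk.nil))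
  have hpos : 0 < H.dist x y :=
    Reachable.pos_dist_of_ne (Walk.cons h1 (Walk.cons h2 Walk.nil)).reachable hxy
  have hne1 : H.dist x y ≠ 1 := fun h => hna (dist_eq_one_iff_adj.mp h)
  omega

lemma gp_no_middle {W : Type*} {H : SimpleGraph W} {S : Set W} (hS : IsGPSet H S)
    {x y m : W} (hx : x ∈ S) (hy : y ∈ S) (hm : m ∈ S) (hxy : x ≠ y)
    (hna : ¬ H.Adj x y) (h1 : H.Adj x m) (h2 : H.Adj m y)
    (hmx : m ≠ x) (hmy : m ≠ y) : False := by
  have hd : H.dist x y = 2 := dist_eq_two'_s7 hxy hna h1 h2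
  have hl : (Walk.cons h1 (Walk.cons h2 Walk.nil)).length = H.dist x y := by
    simp [hd]
  rcases hS x hx y hy _ hl m hm (by simp) with h | h
  · exact hmx h
  · exact hmy h

lemma walk_getVert_injOn {W : Type*} {H : SimpleGraph W} {u v : W} (p : H.Walk u v) :
    p.IsPath → ∀ i, i ≤ p.length → ∀ j, j ≤ p.length → p.getVert i = p.getVert j → i = j := by
  induction p with
  | nil => intro _ i hi j hj _; simp at hi hj; omega
  | @cons u w v h q ih =>
    intro hp i hi j hj heq
    rw [Walk.cons_isPath_iff] at hp
    simp only [Walk.length_cons] at hi hj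
    rcases i with _ | i <;> rcases j with _ | j
    · rfl
    · exfalso; apply hp.2; rw [Walk.mem_support_iff_exists_getVert]
      refine ⟨j, ?_, by omega⟩
      simpa [Walk.getVert_cons_succ] using heq.symm
    · exfalso; apply hp.2; rw [Walk.mem_support_iff_exists_getVert]
      refine ⟨i, ?_, by omega⟩
      simpa [Walk.getVert_cons_succ] using heq
    · have := ih hp.1 i (by omega) j (by omega)
        (by simpa [Walk.getVert_cons_succ] using heq)
      omega

end Helpers

lemma myc_not_all_inl (G : SimpleGraph V)
    {S : Set (Option (V ⊕ V))} (hS : IsGPSet (Mycielskian G) S)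
    (hnbr : ∀ u : V, ∃ w, G.Adj u w)
    (hr : (none : Option (V ⊕ V)) ∈ S) (hA : ∀ u : V, some (Sum.inl u) ∈ S)
    {a b : V} (hab : a ≠ b) (hnadj : ¬ G.Adj a b) : False := by
  classical
  set M := Mycielskian G with hM
  obtain ⟨wa, hwa⟩ := hnbr a
  obtain ⟨wb, hwb⟩ := hnbr b
  have W : M.Walk (some (Sum.inl a)) (some (Sum.inl b)) :=
    .cons (myc_adj_inl_inr.mpr hwa) (.cons myc_adj_inr_none
      (.cons myc_adj_none_inr (.cons (myc_adj_inr_inl.mpr hwb) .nil)))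
  have hreach : M.Reachable (some (Sum.inl a)) (some (Sum.inl b)) := W.reachable
  obtain ⟨p₀, hp₀⟩ := hreach.exists_walk_length_eq_dist
  set p := p₀.bypass with hpdef
  have hpath : p.IsPath := Walk.bypass_isPath _
  have hlen : p.length = M.dist (some (Sum.inl a)) (some (Sum.inl b)) :=
    le_antisymm (hp₀ ▸ Walk.length_bypass_le _) (dist_le _)
  have hd2 : 2 ≤ p.length := by
    rw [hlen]
    have hpos : 0 < M.dist (some (Sum.inl a)) (some (Sum.inl b)) :=
      Reachable.pos_dist_of_ne hreach (by simp [hab])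
    have hne1 : M.dist (some (Sum.inl a)) (some (Sum.inl b)) ≠ 1 := fun h =>
      hnadj (myc_adj_inl_inl.mp (dist_eq_one_iff_adj.mp h))
    omega
  have hinj := walk_getVert_injOn p hpath
  have hmid : ∀ i, 0 < i → i < p.length → p.getVert i ∈ S → False := by
    intro i h0 hil hiS
    rcases hS _ (hA a) _ (hA b) p hlen _ hiS
        (Walk.mem_support_iff_exists_getVert.mpr ⟨i, rfl, by omega⟩) with h | h
    · have : i = 0 := hinj i (by omega) 0 (by omega) (by rw [p.getVert_zero]; exact h)
      omega
    · have : i = p.length := hinj i (by omega) p.length le_rfl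
        (by rw [p.getVert_length]; exact h)
      omega
  have hadj01 : M.Adj (some (Sum.inl a)) (p.getVert 1) := by
    have := p.adj_getVert_succ (i := 0) (by omega)
    rwa [p.getVert_zero] at this
  have hadj12 : M.Adj (p.getVert 1) (p.getVert 2) := p.adj_getVert_succ (by omega)
  rcases hx1 : p.getVert 1 with _ | (w | w)
  · exact hmid 1 one_pos (by omega) (hx1 ▸ hr)
  · exact hmid 1 one_pos (by omega) (by rw [hx1]; exact hA w)
  · rw [hx1] at hadj01 hadj12
    have haw : G.Adj a w := myc_adj_inl_inr.mp hadj01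
    by_cases h2 : p.length = 2
    · have hx2 : p.getVert 2 = some (Sum.inl b) := by
        rw [← h2]; exact p.getVert_length
      rw [hx2] at hadj12
      have hbw : G.Adj b w := myc_adj_inr_inl.mp hadj12
      have hql : (Walk.cons (myc_adj_inl_inl.mpr haw)
          (Walk.cons (myc_adj_inl_inl.mpr hbw.symm) (Walk.nil (G := M)))).length
          = M.dist (some (Sum.inl a)) (some (Sum.inl b)) := by
        rw [← hlen, h2]; simp
      rcases hS _ (hA a) _ (hA b) _ hql _ (hA w) (by simp) with h | h
      · simp only [Option.some.injEq, Sum.inl.injEq] at h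
        exact haw.ne' h
      · simp only [Option.some.injEq, Sum.inl.injEq] at h
        exact hbw.ne' h
    · rcases hx2 : p.getVert 2 with _ | (x | x)
      · exact hmid 2 two_pos (by omega) (hx2 ▸ hr)
      · exact hmid 2 two_pos (by omega) (by rw [hx2]; exact hA x)
      · rw [hx2] at hadj12
        exact myc_not_adj_inr_inr hadj12


lemma myc_gpset_card_le [Fintype V] (G : SimpleGraph V) [DecidableRel G.Adj]
    (hne : G ≠ ⊤) (hδ : 1 ≤ G.minDegree)
    {S : Set (Option (V ⊕ V))} (hS : IsGPSet (Mycielskian G) S) :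
    (S.ncard : ℤ) ≤ Fintype.card V + max 0 ((indepNumber G : ℤ) - G.minDegree + 1) := by
  classical
  obtain ⟨a, b, hab, hnadj⟩ : ∃ a b : V, a ≠ b ∧ ¬ G.Adj a b := by
    by_contra h
    push_neg at h
    apply hne
    ext x y
    simp only [top_adj]
    exact ⟨fun h' => h'.ne, h x y⟩
  have hnbr : ∀ u : V, ∃ w, G.Adj u w := fun u =>
    (G.degree_pos_iff_exists_adj u).mp (lt_of_lt_of_le hδ (G.minDegree_le_degree u))
  have hbddI : BddAbove {k | ∃ T : Set V, (∀ u ∈ T, ∀ v ∈ T, ¬ G.Adj u v) ∧ T.ncard = k} := by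
    refine ⟨Fintype.card V, ?_⟩
    rintro k ⟨T, -, rfl⟩
    calc T.ncard ≤ (Set.univ : Set V).ncard :=
          Set.ncard_le_ncard (Set.subset_univ T) Set.finite_univ
      _ = Fintype.card V := by rw [Set.ncard_univ, Nat.card_eq_fintype_card]
  have hα2 : 2 ≤ indepNumber G := by
    refine le_csSup hbddI ⟨{a, b}, ?_, Set.ncard_pair hab⟩
    intro u hu v hv
    simp only [Set.mem_insert_iff, Set.mem_singleton_iff] at hu hv
    rcases hu with rfl | rfl <;> rcases hv with rfl | rfl
    · exact G.irrefl
    · exact hnadj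
    · exact fun h => hnadj h.symm
    · exact G.irrefl
  have hn2 : 2 ≤ Fintype.card V := Fintype.one_lt_card_iff_nontrivial.mpr ⟨⟨a, b, hab⟩⟩
  have hmax0 : (0 : ℤ) ≤ max 0 ((indepNumber G : ℤ) - G.minDegree + 1) := le_max_left _ _
  have hmax1 : (indepNumber G : ℤ) - G.minDegree + 1 ≤
      max 0 ((indepNumber G : ℤ) - G.minDegree + 1) := le_max_right _ _
  set A : Finset V := Finset.univ.filter (fun u => some (Sum.inl u) ∈ S) with hAdef
  set B : Finset V := Finset.univ.filter (fun u => some (Sum.inr u) ∈ S) with hBdef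
  have hmemA : ∀ u : V, u ∈ A ↔ some (Sum.inl u) ∈ S := by intro u; simp [hAdef]
  have hmemB : ∀ u : V, u ∈ B ↔ some (Sum.inr u) ∈ S := by intro u; simp [hBdef]
  have hfin : S.Finite := Set.toFinite S
  have hC2 : ∀ u, some (Sum.inl u) ∈ S → some (Sum.inr u) ∈ S →
      ∀ w, G.Adj u w → some (Sum.inl w) ∈ S → False := by
    intro u h1 h2 w hw h3
    exact gp_no_middle hS h1 h2 h3 (by simp)
      (fun h => G.irrefl (myc_adj_inl_inr.mp h))
      (myc_adj_inl_inl.mpr hw) (myc_adj_inl_inr.mpr hw.symm)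
      (by simp [hw.ne']) (by simp)
  have hC3 : ∀ u, some (Sum.inl u) ∈ S → ∀ w₁ w₂, G.Adj u w₁ → G.Adj u w₂ →
      some (Sum.inr w₁) ∈ S → some (Sum.inr w₂) ∈ S → w₁ = w₂ := by
    intro u hu w₁ w₂ h1 h2 hw1 hw2
    by_contra hne'
    exact gp_no_middle hS hw1 hw2 hu (by simp [hne']) myc_not_adj_inr_inr
      (myc_adj_inr_inl.mpr h1) (myc_adj_inl_inr.mpr h2) (by simp) (by simp)
  have hCcard : (A ∩ B).card ≤ indepNumber G := by
    refine le_csSup hbddI ⟨(↑(A ∩ B) : Set V), ?_, Set.ncard_coe_finset _⟩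
    intro u hu v hv hadj
    rw [Finset.mem_coe, Finset.mem_inter] at hu hv
    exact hC2 u ((hmemA u).mp hu.1) ((hmemB u).mp hu.2) v hadj ((hmemA v).mp hv.1)
  by_cases hr : (none : Option (V ⊕ V)) ∈ S
  · -- root is in S
    have hC4 : ∀ u, some (Sum.inl u) ∈ S → ∀ w, G.Adj u w →
        some (Sum.inr w) ∈ S → False := by
      intro u hu w hw hw'
      exact gp_no_middle hS hr hu hw' (by simp) myc_not_adj_none_inl
        myc_adj_none_inr (myc_adj_inr_inl.mpr hw) (by simp) (by simp)
    have hB1 : B.card ≤ 1 := by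
      rw [Finset.card_le_one]
      intro w₁ h₁ w₂ h₂
      by_contra hne'
      exact gp_no_middle hS ((hmemB w₁).mp h₁) ((hmemB w₂).mp h₂) hr (by simp [hne'])
        myc_not_adj_inr_inr myc_adj_inr_none myc_adj_none_inr (by simp) (by simp)
    have hcount : S.ncard ≤ A.card + B.card + 1 := by
      rw [Set.ncard_eq_toFinset_card S hfin]
      have hsub : hfin.toFinset ⊆ A.image (fun u => some (Sum.inl u)) ∪
          B.image (fun u => some (Sum.inr u)) ∪ {(none : Option (V ⊕ V))} := by
        intro x hx
        rw [Set.Finite.mem_toFinset] at hx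
        rcases x with _ | (u | u)
        · exact Finset.mem_union_right _ (by simp)
        · exact Finset.mem_union_left _ (Finset.mem_union_left _
            (Finset.mem_image.mpr ⟨u, (hmemA u).mpr hx, rfl⟩))
        · exact Finset.mem_union_left _ (Finset.mem_union_right _
            (Finset.mem_image.mpr ⟨u, (hmemB u).mpr hx, rfl⟩))
      refine (Finset.card_le_card hsub).trans ?_
      refine (Finset.card_union_le _ _).trans ?_
      refine Nat.add_le_add ((Finset.card_union_le _ _).trans
        (Nat.add_le_add Finset.card_image_le Finset.card_image_le)) ?_
      simp
    by_cases hA : A.Nonempty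
    · by_cases hB : B.Nonempty
      · obtain ⟨w, hwB⟩ := hB
        have hwS := (hmemB w).mp hwB
        have hAdisj : A ∩ G.neighborFinset w = ∅ := by
          rw [Finset.eq_empty_iff_forall_notMem]
          intro u hu
          rw [Finset.mem_inter, mem_neighborFinset] at hu
          exact hC4 u ((hmemA u).mp hu.1) w hu.2.symm hwS
        have hAcard : A.card + G.degree w ≤ Fintype.card V := by
          have h := Finset.card_union_add_card_inter A (G.neighborFinset w)
          have h2 := Finset.card_le_univ (A ∪ G.neighborFinset w)
          rw [← card_neighborFinset_eq_degree]
          rw [hAdisj] at h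
          simp only [Finset.card_empty] at h
          omega
        have e1 : (A.card : ℤ) + G.degree w ≤ Fintype.card V := by exact_mod_cast hAcard
        have e2 : (G.minDegree : ℤ) ≤ G.degree w := by
          exact_mod_cast G.minDegree_le_degree w
        have e3 : (B.card : ℤ) ≤ 1 := by exact_mod_cast hB1
        have e4 : (2 : ℤ) ≤ indepNumber G := by exact_mod_cast hα2
        have e5 : (S.ncard : ℤ) ≤ A.card + B.card + 1 := by exact_mod_cast hcount
        linarith
      · have hB0 : B.card = 0 := by
          rw [Finset.not_nonempty_iff_eq_empty] at hB
          simp [hB]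
        have hAne : ¬ ∀ u : V, some (Sum.inl u) ∈ S := fun hall =>
          myc_not_all_inl G hS hnbr hr hall hab hnadj
        obtain ⟨u₀, hu₀⟩ := not_forall.mp hAne
        have hAlt : A.card < Fintype.card V := by
          rw [← Finset.card_univ]
          exact Finset.card_lt_card ((Finset.ssubset_iff_of_subset
            (Finset.subset_univ A)).mpr ⟨u₀, Finset.mem_univ u₀,
              fun h => hu₀ ((hmemA u₀).mp h)⟩)
        have e1 : (A.card : ℤ) + 1 ≤ Fintype.card V := by exact_mod_cast hAlt
        have e5 : (S.ncard : ℤ) ≤ A.card + B.card + 1 := by exact_mod_cast hcount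
        have e6 : (B.card : ℤ) = 0 := by exact_mod_cast hB0
        linarith
    · have hA0 : A.card = 0 := by
        rw [Finset.not_nonempty_iff_eq_empty] at hA
        simp [hA]
      have e1 : (S.ncard : ℤ) ≤ A.card + B.card + 1 := by exact_mod_cast hcount
      have e2 : (A.card : ℤ) = 0 := by exact_mod_cast hA0
      have e3 : (B.card : ℤ) ≤ 1 := by exact_mod_cast hB1
      have e4 : (2 : ℤ) ≤ Fintype.card V := by exact_mod_cast hn2
      linarith
  · -- root is not in S
    have hcount : S.ncard ≤ A.card + B.card := by
      rw [Set.ncard_eq_toFinset_card S hfin]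
      have hsub : hfin.toFinset ⊆ A.image (fun u => some (Sum.inl u)) ∪
          B.image (fun u => some (Sum.inr u)) := by
        intro x hx
        rw [Set.Finite.mem_toFinset] at hx
        rcases x with _ | (u | u)
        · exact absurd hx hr
        · exact Finset.mem_union_left _
            (Finset.mem_image.mpr ⟨u, (hmemA u).mpr hx, rfl⟩)
        · exact Finset.mem_union_right _
            (Finset.mem_image.mpr ⟨u, (hmemB u).mpr hx, rfl⟩)
      exact (Finset.card_le_card hsub).trans ((Finset.card_union_le _ _).trans
        (Nat.add_le_add Finset.card_image_le Finset.card_image_le))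
    have hAB := Finset.card_union_add_card_inter A B
    by_cases hC : (A ∩ B).Nonempty
    · obtain ⟨u₀, hu₀⟩ := hC
      rw [Finset.mem_inter] at hu₀
      have hu₀S : some (Sum.inl u₀) ∈ S := (hmemA _).mp hu₀.1
      have hu₀S' : some (Sum.inr u₀) ∈ S := (hmemB _).mp hu₀.2
      have hAN : A ∩ G.neighborFinset u₀ = ∅ := by
        rw [Finset.eq_empty_iff_forall_notMem]
        intro w hw
        rw [Finset.mem_inter, mem_neighborFinset] at hw
        exact hC2 u₀ hu₀S hu₀S' w hw.2 ((hmemA w).mp hw.1)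
      have hBN : (B ∩ G.neighborFinset u₀).card ≤ 1 := by
        rw [Finset.card_le_one]
        intro w₁ h₁ w₂ h₂
        rw [Finset.mem_inter, mem_neighborFinset] at h₁ h₂
        exact hC3 u₀ hu₀S w₁ w₂ h₁.2 h₂.2 ((hmemB _).mp h₁.1) ((hmemB _).mp h₂.1)
      have hunion : ((A ∪ B) ∩ G.neighborFinset u₀).card ≤ 1 := by
        rw [Finset.union_inter_distrib_right, hAN, Finset.empty_union]
        exact hBN
      have hkey : (A ∪ B).card + G.degree u₀ ≤ Fintype.card V + 1 := by
        have h := Finset.card_union_add_card_inter (A ∪ B) (G.neighborFinset u₀)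
        have h2 := Finset.card_le_univ ((A ∪ B) ∪ G.neighborFinset u₀)
        rw [← card_neighborFinset_eq_degree]
        omega
      have e1 : ((A ∪ B).card : ℤ) + G.degree u₀ ≤ Fintype.card V + 1 := by
        exact_mod_cast hkey
      have e2 : (G.minDegree : ℤ) ≤ G.degree u₀ := by
        exact_mod_cast G.minDegree_le_degree u₀
      have e3 : ((A ∩ B).card : ℤ) ≤ indepNumber G := by exact_mod_cast hCcard
      have e4 : ((A ∪ B).card : ℤ) + (A ∩ B).card = A.card + B.card := by
        exact_mod_cast hAB
      have e5 : (S.ncard : ℤ) ≤ A.card + B.card := by exact_mod_cast hcount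
      linarith
    · have hC0 : (A ∩ B).card = 0 := by
        rw [Finset.not_nonempty_iff_eq_empty] at hC
        simp [hC]
      have hABle : A.card + B.card ≤ Fintype.card V := by
        have h2 := Finset.card_le_univ (A ∪ B)
        omega
      have e1 : (S.ncard : ℤ) ≤ A.card + B.card := by exact_mod_cast hcount
      have e2 : ((A.card : ℤ) + B.card) ≤ Fintype.card V := by exact_mod_cast hABle
      linarith


/-- For a non-complete graph `G` of order `n`, independence number `α`
and minimum degree `δ ≥ 1`, `gp(μ(G)) ≤ n + max {0, α - δ + 1}`. -/
theorem gpNumber_mycielskian_upper_bound [Fintype V] (G : SimpleGraph V)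
    [DecidableRel G.Adj] (hne : G ≠ ⊤) (hδ : 1 ≤ G.minDegree) :
    (gpNumber (Mycielskian G) : ℤ) ≤
      Fintype.card V + max 0 ((indepNumber G : ℤ) - G.minDegree + 1) := by
  classical
  have hnonempty : {k | ∃ S : Set (Option (V ⊕ V)),
      IsGPSet (Mycielskian G) S ∧ S.ncard = k}.Nonempty :=
    ⟨0, ∅, fun u hu => absurd hu (Set.notMem_empty u), Set.ncard_empty _⟩
  have hbddG : BddAbove {k | ∃ S : Set (Option (V ⊕ V)),
      IsGPSet (Mycielskian G) S ∧ S.ncard = k} := by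
    refine ⟨Fintype.card (Option (V ⊕ V)), ?_⟩
    rintro k ⟨T, -, rfl⟩
    calc T.ncard ≤ (Set.univ : Set (Option (V ⊕ V))).ncard :=
          Set.ncard_le_ncard (Set.subset_univ T) Set.finite_univ
      _ = Fintype.card (Option (V ⊕ V)) := by rw [Set.ncard_univ, Nat.card_eq_fintype_card]
  obtain ⟨S, hS, hcard⟩ := Nat.sSup_mem hnonempty hbddG
  rw [gpNumber, ← hcard]
  exact myc_gpset_card_le G hne hδ hS
end
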